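/- arXiv:1311.6405 — 8 statements merged into one kernel-verified Lean document; each statement's English description precedes it below -/
import Mathlib

section
/- Let ψ, α, β : [0,∞) → ℝ be regulated functions with α(t) ≤ β(t) for all t ≥ 0. Then for all 0 ≤ a < b < ∞, TV^{α,β}(ψ,[a,b]) = UTV^{α,β}(ψ,[a,b]) + DTV^{α,β}(ψ,[a,b]). -/
open Filter Set Topology
open scoped ENNReal

/-- Sum of `f` over consecutive pairs of a finite sequence of points. -/
noncomputable def genVar (f : ℝ → ℝ → ℝ) (a b : ℝ) : ℝ≥0∞ :=
  ⨆ (n : ℕ) (t : ℕ → ℝ)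
    (_ : (∀ i, i < n → t i < t (i + 1)) ∧ a ≤ t 0 ∧ t n ≤ b),
    ENNReal.ofReal (∑ i ∈ Finset.range n, f (t i) (t (i + 1)))

noncomputable def TV (ψ : ℝ → ℝ) : ℝ → ℝ → ℝ≥0∞ :=
  genVar (fun s t => |ψ t - ψ s|)

noncomputable def UTV (ψ : ℝ → ℝ) : ℝ → ℝ → ℝ≥0∞ :=
  genVar (fun s t => max (ψ t - ψ s) 0)

noncomputable def DTV (ψ : ℝ → ℝ) : ℝ → ℝ → ℝ≥0∞ :=
  genVar (fun s t => max (ψ s - ψ t) 0)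

noncomputable def TVc (ψ : ℝ → ℝ) (c : ℝ) : ℝ → ℝ → ℝ≥0∞ :=
  genVar (fun s t => max (|ψ t - ψ s| - c) 0)

noncomputable def UTVc (ψ : ℝ → ℝ) (c : ℝ) : ℝ → ℝ → ℝ≥0∞ :=
  genVar (fun s t => max (ψ t - ψ s - c) 0)

noncomputable def DTVc (ψ : ℝ → ℝ) (c : ℝ) : ℝ → ℝ → ℝ≥0∞ :=
  genVar (fun s t => max (ψ s - ψ t - c) 0)

noncomputable def TVab (ψ α β : ℝ → ℝ) : ℝ → ℝ → ℝ≥0∞ :=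
  genVar (fun s t =>
    max (|(ψ t - (α t + β t) / 2) - (ψ s - (α s + β s) / 2)|
          - ((β t - α t) + (β s - α s)) / 2) 0)

noncomputable def UTVab (ψ α β : ℝ → ℝ) : ℝ → ℝ → ℝ≥0∞ :=
  genVar (fun s t =>
    max ((ψ t - (α t + β t) / 2) - (ψ s - (α s + β s) / 2)
          - ((β t - α t) + (β s - α s)) / 2) 0)

noncomputable def DTVab (ψ α β : ℝ → ℝ) : ℝ → ℝ → ℝ≥0∞ :=
  genVar (fun s t =>
    max ((ψ s - (α s + β s) / 2) - (ψ t - (α t + β t) / 2)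
          - ((β t - α t) + (β s - α s)) / 2) 0)

/-- Regulated on `[a,∞)`: right limits everywhere, left limits at points `> a`. -/
def Regulated (a : ℝ) (ψ : ℝ → ℝ) : Prop :=
  (∀ x, a ≤ x → ∃ L, Tendsto ψ (𝓝[>] x) (𝓝 L)) ∧
  (∀ x, a < x → ∃ L, Tendsto ψ (𝓝[<] x) (𝓝 L))

/-- Regulated on `[a,b]`. -/
def RegulatedOn (a b : ℝ) (ψ : ℝ → ℝ) : Prop :=
  (∀ x, a ≤ x → x < b → ∃ L, Tendsto ψ (𝓝[>] x) (𝓝 L)) ∧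
  (∀ x, a < x → x ≤ b → ∃ L, Tendsto ψ (𝓝[<] x) (𝓝 L))


namespace Stmt7Aux

/-- upward truncated increment -/
noncomputable def vU (φ γ : ℝ → ℝ) (s t : ℝ) : ℝ := φ t - φ s - (γ s + γ t) / 2

/-- downward truncated increment -/
noncomputable def vD (φ γ : ℝ → ℝ) (s t : ℝ) : ℝ := φ s - φ t - (γ s + γ t) / 2

/-- two-sided truncated increment, nonnegative part -/
noncomputable def fT (φ γ : ℝ → ℝ) (s t : ℝ) : ℝ := max (max (vU φ γ s t) (vD φ γ s t)) 0

lemma vU_neg (φ γ : ℝ → ℝ) (s t : ℝ) : vU (fun x => -φ x) γ s t = vD φ γ s t := by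
  simp [vU, vD]; ring

lemma vD_neg (φ γ : ℝ → ℝ) (s t : ℝ) : vD (fun x => -φ x) γ s t = vU φ γ s t := by
  simp [vU, vD]; ring

lemma fT_neg (φ γ : ℝ → ℝ) (s t : ℝ) : fT (fun x => -φ x) γ s t = fT φ γ s t := by
  simp only [fT, vU_neg, vD_neg, max_comm (vU φ γ s t)]

lemma fT_nonneg (φ γ : ℝ → ℝ) (s t : ℝ) : 0 ≤ fT φ γ s t := le_max_right _ _

lemma vU_le_fT (φ γ : ℝ → ℝ) (s t : ℝ) : vU φ γ s t ≤ fT φ γ s t :=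
  le_trans (le_max_left _ _) (le_max_left _ _)

lemma vD_le_fT (φ γ : ℝ → ℝ) (s t : ℝ) : vD φ γ s t ≤ fT φ γ s t :=
  le_trans (le_max_right _ _) (le_max_left _ _)

lemma maxvU_le_fT (φ γ : ℝ → ℝ) (s t : ℝ) : max (vU φ γ s t) 0 ≤ fT φ γ s t :=
  max_le (vU_le_fT _ _ _ _) (fT_nonneg _ _ _ _)

lemma maxvD_le_fT (φ γ : ℝ → ℝ) (s t : ℝ) : max (vD φ γ s t) 0 ≤ fT φ γ s t :=
  max_le (vD_le_fT _ _ _ _) (fT_nonneg _ _ _ _)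

/-- the nested-splitting identity -/
lemma vU_split (φ γ : ℝ → ℝ) (s u v t : ℝ) :
    vU φ γ s t + vD φ γ u v = vU φ γ s u + vU φ γ v t := by
  simp [vU, vD]; ring

lemma vU_self (φ γ : ℝ → ℝ) (hγ : ∀ x, 0 ≤ γ x) (s : ℝ) : vU φ γ s s ≤ 0 := by
  have := hγ s; simp [vU]; linarith

/-- sum of a binary function over consecutive pairs of a list -/
noncomputable def pairSum (F : ℝ → ℝ → ℝ) : List ℝ → ℝ
  | x :: y :: l => F x y + pairSum F (y :: l)
  | _ => 0

@[simp] lemma pairSum_nil (F : ℝ → ℝ → ℝ) : pairSum F [] = 0 := rfl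
@[simp] lemma pairSum_single (F : ℝ → ℝ → ℝ) (x : ℝ) : pairSum F [x] = 0 := rfl
@[simp] lemma pairSum_cons_cons (F : ℝ → ℝ → ℝ) (x y : ℝ) (l : List ℝ) :
    pairSum F (x :: y :: l) = F x y + pairSum F (y :: l) := rfl

lemma pairSum_nonneg (F : ℝ → ℝ → ℝ) (hF : ∀ s t, 0 ≤ F s t) :
    ∀ l : List ℝ, 0 ≤ pairSum F l := by
  intro l
  induction l with
  | nil => simp
  | cons x l ih =>
    cases l with
    | nil => simp
    | cons y l => simpa using add_nonneg (hF x y) ih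

lemma pairSum_congr (F G : ℝ → ℝ → ℝ) :
    ∀ l : List ℝ, (∀ x ∈ l, ∀ y ∈ l, F x y = G x y) → pairSum F l = pairSum G l := by
  intro l
  induction l with
  | nil => simp
  | cons x l ih =>
    intro h
    cases l with
    | nil => simp
    | cons y l =>
      simp only [pairSum_cons_cons]
      rw [h x (by simp) y (by simp), ih (fun a ha b hb => h a (by simp [ha]) b (by simp [hb]))]

/-- extend a sorted list at the front by a point `x` that is `≤` everything,
without decreasing the pair sum. -/
lemma exists_cons (F : ℝ → ℝ → ℝ) (hF : ∀ s t, 0 ≤ F s t) (x : ℝ) (l : List ℝ)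
    (hl : l.Chain' (· < ·)) (hxl : ∀ y ∈ l, x ≤ y) :
    ∃ m : List ℝ, m.Chain' (· < ·) ∧ (∀ y ∈ m, y = x ∨ y ∈ l) ∧
      m.head? = some x ∧ pairSum F l ≤ pairSum F m := by
  match l with
  | [] => exact ⟨[x], List.isChain_singleton x, by simp, rfl, by simp⟩
  | y :: l' =>
    rcases eq_or_lt_of_le (hxl y (by simp)) with h | h
    · exact ⟨y :: l', hl, fun z hz => Or.inr hz, by simp [h], le_rfl⟩
    · refine ⟨x :: y :: l', List.isChain_cons_cons.2 ⟨h, hl⟩, ?_, rfl, ?_⟩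
      · intro z hz
        rcases List.mem_cons.1 hz with h | h
        · exact Or.inl h
        · exact Or.inr h
      · simp only [pairSum_cons_cons]
        linarith [hF x y]

/-- extend a sorted list at the front by a pair `x < y` with `y ≤` everything,
gaining the term `F x y`. -/
lemma exists_cons_pair (F : ℝ → ℝ → ℝ) (hF : ∀ s t, 0 ≤ F s t) (x y : ℝ) (hxy : x < y)
    (l : List ℝ) (hl : l.Chain' (· < ·)) (hyl : ∀ z ∈ l, y ≤ z) :
    ∃ m : List ℝ, m.Chain' (· < ·) ∧ (∀ z ∈ m, z = x ∨ z = y ∨ z ∈ l) ∧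
      F x y + pairSum F l ≤ pairSum F m := by
  obtain ⟨m1, hc, hmem, hh, hle⟩ := exists_cons F hF y l hl hyl
  match m1, hh with
  | y' :: m1', hh =>
    have hy : y' = y := by simpa using hh
    subst hy
    refine ⟨x :: y' :: m1', List.isChain_cons_cons.2 ⟨hxy, hc⟩, ?_, ?_⟩
    · intro z hz
      rcases List.mem_cons.1 hz with h | h
      · exact Or.inl h
      · rcases hmem z h with h' | h'
        · exact Or.inr (Or.inl h')
        · exact Or.inr (Or.inr h')
    · simp only [pairSum_cons_cons]
      linarith

/-- a "system" of disjoint increasing intervals -/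
def Sys (L : List (ℝ × ℝ)) : Prop :=
  (∀ p ∈ L, p.1 < p.2) ∧ L.Chain' (fun p q => p.2 ≤ q.1)

/-- `x` is an endpoint of some pair of `L` -/
def InPts (x : ℝ) (L : List (ℝ × ℝ)) : Prop := ∃ p ∈ L, x = p.1 ∨ x = p.2

lemma inPts_cons_of {x : ℝ} {p : ℝ × ℝ} {L : List (ℝ × ℝ)} (h : InPts x L) :
    InPts x (p :: L) := by
  obtain ⟨q, hq, h'⟩ := h; exact ⟨q, List.mem_cons_of_mem _ hq, h'⟩

lemma sys_tail {p : ℝ × ℝ} {L : List (ℝ × ℝ)} (h : Sys (p :: L)) : Sys L :=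
  ⟨fun q hq => h.1 q (List.mem_cons_of_mem _ hq), (List.isChain_cons.1 h.2).2⟩

lemma pts_lb : ∀ (L : List (ℝ × ℝ)) (c : ℝ),
    (∀ p ∈ L, p.1 < p.2) → L.Chain' (fun p q => p.2 ≤ q.1) →
    (∀ p ∈ L.head?, c ≤ p.1) → ∀ x, InPts x L → c ≤ x := by
  intro L
  induction L with
  | nil => intro c _ _ _ x hx; obtain ⟨q, hq, _⟩ := hx; simp at hq
  | cons p L ih =>
    intro c h1 h2 hh x hx
    have hcp : c ≤ p.1 := hh p rfl
    obtain ⟨q, hq, hor⟩ := hx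
    rcases List.mem_cons.1 hq with rfl | hq'
    · rcases hor with rfl | rfl
      · exact hcp
      · exact le_of_lt (lt_of_le_of_lt hcp (h1 q (by simp)))
    · have hch := List.isChain_cons.1 h2
      refine ih c (fun r hr => h1 r (List.mem_cons_of_mem _ hr)) hch.2 ?_ x ⟨q, hq', hor⟩
      intro r hr
      have : p.2 ≤ r.1 := hch.1 r hr
      have : p.1 < p.2 := h1 p (by simp)
      linarith [hch.1 r hr]

/-- lower bound on every point of a system given a bound on the first left endpoint -/
lemma sys_pts_lb {L : List (ℝ × ℝ)} {c : ℝ} (h : Sys L)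
    (hh : ∀ p ∈ L.head?, c ≤ p.1) : ∀ x, InPts x L → c ≤ x :=
  pts_lb L c h.1 h.2 hh

noncomputable def sumU (φ γ : ℝ → ℝ) (L : List (ℝ × ℝ)) : ℝ :=
  (L.map (fun p => max (vU φ γ p.1 p.2) 0)).sum

noncomputable def sumD (φ γ : ℝ → ℝ) (L : List (ℝ × ℝ)) : ℝ :=
  (L.map (fun p => max (vD φ γ p.1 p.2) 0)).sum

@[simp] lemma sumU_nil (φ γ : ℝ → ℝ) : sumU φ γ [] = 0 := rfl
@[simp] lemma sumD_nil (φ γ : ℝ → ℝ) : sumD φ γ [] = 0 := rfl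
@[simp] lemma sumU_cons (φ γ : ℝ → ℝ) (p : ℝ × ℝ) (L : List (ℝ × ℝ)) :
    sumU φ γ (p :: L) = max (vU φ γ p.1 p.2) 0 + sumU φ γ L := rfl
@[simp] lemma sumD_cons (φ γ : ℝ → ℝ) (p : ℝ × ℝ) (L : List (ℝ × ℝ)) :
    sumD φ γ (p :: L) = max (vD φ γ p.1 p.2) 0 + sumD φ γ L := rfl

lemma sumU_neg (φ γ : ℝ → ℝ) (L : List (ℝ × ℝ)) :
    sumU (fun x => -φ x) γ L = sumD φ γ L := by
  induction L with
  | nil => rfl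
  | cons p L ih => simp [ih, vU_neg]

lemma sumD_neg (φ γ : ℝ → ℝ) (L : List (ℝ × ℝ)) :
    sumD (fun x => -φ x) γ L = sumU φ γ L := by
  induction L with
  | nil => rfl
  | cons p L ih => simp [ih, vD_neg]

lemma sumU_nonneg (φ γ : ℝ → ℝ) (L : List (ℝ × ℝ)) : 0 ≤ sumU φ γ L := by
  induction L with
  | nil => simp
  | cons p L ih => simp only [sumU_cons]; positivity

lemma sumD_nonneg (φ γ : ℝ → ℝ) (L : List (ℝ × ℝ)) : 0 ≤ sumD φ γ L := by
  induction L with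
  | nil => simp
  | cons p L ih => simp only [sumD_cons]; positivity

lemma inPts_head_l (s t : ℝ) (L : List (ℝ × ℝ)) : InPts s ((s,t) :: L) :=
  ⟨(s,t), by simp, Or.inl rfl⟩

lemma inPts_head_r (s t : ℝ) (L : List (ℝ × ℝ)) : InPts t ((s,t) :: L) :=
  ⟨(s,t), by simp, Or.inr rfl⟩

lemma inPts_cons_elim {x : ℝ} {p : ℝ × ℝ} {L : List (ℝ × ℝ)} (h : InPts x (p :: L)) :
    (x = p.1 ∨ x = p.2) ∨ InPts x L := by
  obtain ⟨q, hq, hor⟩ := h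
  rcases List.mem_cons.1 hq with rfl | hq'
  · exact Or.inl hor
  · exact Or.inr ⟨q, hq', hor⟩

/-- the target of the main induction -/
def Goal (φ γ : ℝ → ℝ) (U D : List (ℝ × ℝ)) : Prop :=
  ∃ l : List ℝ, l.Chain' (· < ·) ∧ (∀ x ∈ l, InPts x U ∨ InPts x D) ∧
    sumU φ γ U + sumD φ γ D ≤ pairSum (fT φ γ) l

lemma step (γ : ℝ → ℝ) (hγ : ∀ x, 0 ≤ γ x) (N : ℕ)
    (IH : ∀ (φ : ℝ → ℝ) (U D : List (ℝ × ℝ)),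
      U.length + D.length ≤ N → Sys U → Sys D → Goal φ γ U D)
    (φ : ℝ → ℝ) (s t u v : ℝ) (U' D' : List (ℝ × ℝ))
    (hU : Sys ((s,t) :: U')) (hD : Sys ((u,v) :: D'))
    (hlen : U'.length + D'.length + 1 ≤ N)
    (hsu : s ≤ u) (hA : 0 < vU φ γ s t) (hB : 0 < vD φ γ u v) :
    Goal φ γ ((s,t) :: U') ((u,v) :: D') := by
  have hst : s < t := hU.1 (s,t) (by simp)
  have huv : u < v := hD.1 (u,v) (by simp)
  have hU' : Sys U' := sys_tail hU
  have hD' : Sys D' := sys_tail hD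
  have hUhead : ∀ p ∈ U'.head?, t ≤ p.1 := (List.isChain_cons.1 hU.2).1
  have hDhead : ∀ p ∈ D'.head?, v ≤ p.1 := (List.isChain_cons.1 hD.2).1
  have hUlb : ∀ x, InPts x U' → t ≤ x := sys_pts_lb hU' hUhead
  have hDlb : ∀ x, InPts x D' → v ≤ x := sys_pts_lb hD' hDhead
  have hDlb0 : ∀ x, InPts x ((u,v) :: D') → u ≤ x :=
    sys_pts_lb (c := u) hD (by intro p hp; simp only [List.head?_cons, Option.mem_def, Option.some.injEq] at hp; subst hp; exact le_rfl)
  rcases le_or_gt t u with htu | hut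
  · -- disjoint: consume (s,t)
    obtain ⟨l', hc, hmem, hsum⟩ := IH φ U' ((u,v) :: D') (by simp only [List.length_cons]; omega) hU' hD
    have hzb : ∀ z ∈ l', t ≤ z := by
      intro z hz
      rcases hmem z hz with h | h
      · exact hUlb z h
      · exact le_trans htu (hDlb0 z h)
    obtain ⟨m, hcm, hmm, hms⟩ :=
      exists_cons_pair (fT φ γ) (fT_nonneg φ γ) s t hst l' hc hzb
    refine ⟨m, hcm, ?_, ?_⟩
    · intro z hz
      rcases hmm z hz with rfl | rfl | h
      · exact Or.inl (inPts_head_l _ _ _)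
      · exact Or.inl (inPts_head_r _ _ _)
      · rcases hmem z h with h' | h'
        · exact Or.inl (inPts_cons_of h')
        · exact Or.inr h'
    · have h1 := maxvU_le_fT φ γ s t
      simp only [sumU_cons] at *
      linarith
  · rcases le_or_gt v t with hvt | htv
    · -- nested: D-pair (u,v) inside [s,t]
      have key : vU φ γ s t + vD φ γ u v = vU φ γ s u + vU φ γ v t := vU_split φ γ s u v t
      have hAs : max (vU φ γ s t) 0 = vU φ γ s t := max_eq_left hA.le
      have hBs : max (vD φ γ u v) 0 = vD φ γ u v := max_eq_left hB.le
      rcases eq_or_lt_of_le hvt with hvt' | hvt'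
      · -- v = t
        obtain ⟨l', hc, hmem, hsum⟩ := IH φ U' D' (by omega) hU' hD'
        have hvtt : vU φ γ v t ≤ 0 := by rw [hvt']; exact vU_self φ γ hγ t
        have hzb : ∀ z ∈ l', v ≤ z := by
          intro z hz
          rcases hmem z hz with h | h
          · exact hvt' ▸ hUlb z h
          · exact hDlb z h
        rcases eq_or_lt_of_le hsu with hsueq | hsu'
        · -- s = u : drop both pairs
          refine ⟨l', hc, ?_, ?_⟩
          · intro z hz
            rcases hmem z hz with h | h
            · exact Or.inl (inPts_cons_of h)
            · exact Or.inr (inPts_cons_of h)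
          · have hss : vU φ γ s u ≤ 0 := by rw [← hsueq]; exact vU_self φ γ hγ s
            simp only [sumU_cons, sumD_cons, hAs, hBs]
            linarith
        · obtain ⟨m, hcm, hmm, hms⟩ :=
            exists_cons_pair (fT φ γ) (fT_nonneg φ γ) s u hsu' l' hc
              (fun z hz => le_trans huv.le (hzb z hz))
          refine ⟨m, hcm, ?_, ?_⟩
          · intro z hz
            rcases hmm z hz with h1 | h1 | h
            · exact Or.inl ⟨(s,t), by simp, Or.inl h1⟩
            · exact Or.inr ⟨(u,v), by simp, Or.inl h1⟩
            · rcases hmem z h with h' | h'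
              · exact Or.inl (inPts_cons_of h')
              · exact Or.inr (inPts_cons_of h')
          · have h1 := vU_le_fT φ γ s u
            simp only [sumU_cons, sumD_cons, hAs, hBs]
            linarith
      · -- v < t : split the up pair into (s,u) and (v,t)
        have hU2 : Sys ((v,t) :: U') :=
          ⟨by intro p hp; rcases List.mem_cons.1 hp with rfl | hp'
              · exact hvt'
              · exact hU.1 p (List.mem_cons_of_mem _ hp'),
           List.isChain_cons.2 ⟨hUhead, hU'.2⟩⟩
        obtain ⟨l', hc, hmem, hsum⟩ := IH φ ((v,t) :: U') D' (by simp only [List.length_cons]; omega) hU2 hD'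
        have hzb : ∀ z ∈ l', v ≤ z := by
          intro z hz
          rcases hmem z hz with h | h
          · exact sys_pts_lb (c := v) hU2 (by intro p hp; simp only [List.head?_cons, Option.mem_def, Option.some.injEq] at hp; subst hp; exact le_rfl) z h
          · exact hDlb z h
        have memmap : ∀ z, (InPts z ((v,t) :: U') ∨ InPts z D') →
            InPts z ((s,t) :: U') ∨ InPts z ((u,v) :: D') := by
          intro z h
          rcases h with h | h
          · rcases inPts_cons_elim h with (h2 | h2) | h'
            · exact Or.inr ⟨(u,v), by simp, Or.inr h2⟩
            · exact Or.inl ⟨(s,t), by simp, Or.inr h2⟩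
            · exact Or.inl (inPts_cons_of h')
          · exact Or.inr (inPts_cons_of h)
        have hsum2 : sumU φ γ ((v,t) :: U') + sumD φ γ D' =
            max (vU φ γ v t) 0 + (sumU φ γ U' + sumD φ γ D') := by
          simp only [sumU_cons]; ring
        rcases eq_or_lt_of_le hsu with hsueq | hsu'
        · refine ⟨l', hc, fun z hz => memmap z (hmem z hz), ?_⟩
          have hss : vU φ γ s u ≤ 0 := by rw [← hsueq]; exact vU_self φ γ hγ s
          have h2 : vU φ γ v t ≤ max (vU φ γ v t) 0 := le_max_left _ _
          simp only [sumU_cons, sumD_cons, hAs, hBs]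
          simp only [sumU_cons] at hsum
          linarith
        · obtain ⟨m, hcm, hmm, hms⟩ :=
            exists_cons_pair (fT φ γ) (fT_nonneg φ γ) s u hsu' l' hc
              (fun z hz => le_trans huv.le (hzb z hz))
          refine ⟨m, hcm, ?_, ?_⟩
          · intro z hz
            rcases hmm z hz with rfl | rfl | h
            · exact Or.inl (inPts_head_l _ _ _)
            · exact Or.inr (inPts_head_l _ _ _)
            · exact memmap z (hmem z h)
          · have h1 := vU_le_fT φ γ s u
            have h2 : vU φ γ v t ≤ max (vU φ γ v t) 0 := le_max_left _ _
            simp only [sumU_cons, sumD_cons, hAs, hBs]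
            simp only [sumU_cons] at hsum
            linarith
    · -- crossing : s ≤ u < t < v
      have hAs : max (vU φ γ s t) 0 = vU φ γ s t := max_eq_left hA.le
      have hBs : max (vD φ γ u v) 0 = vD φ γ u v := max_eq_left hB.le
      rcases le_or_gt (φ t - φ u - (γ t - γ u)/2) 0 with hδ | hδ
      · -- shrink the up pair to (s,u)
        have hkey : vU φ γ s t ≤ vU φ γ s u := by simp only [vU]; linarith
        have hsu' : s < u := by
          rcases eq_or_lt_of_le hsu with rfl | h
          · exact absurd (lt_of_lt_of_le hA (le_trans hkey (vU_self φ γ hγ s)))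
              (lt_irrefl 0)
          · exact h
        obtain ⟨l', hc, hmem, hsum⟩ := IH φ U' ((u,v) :: D') (by simp only [List.length_cons]; omega) hU' hD
        have hzb : ∀ z ∈ l', u ≤ z := by
          intro z hz
          rcases hmem z hz with h | h
          · exact le_trans hut.le (hUlb z h)
          · exact hDlb0 z h
        obtain ⟨m, hcm, hmm, hms⟩ :=
          exists_cons_pair (fT φ γ) (fT_nonneg φ γ) s u hsu' l' hc hzb
        refine ⟨m, hcm, ?_, ?_⟩
        · intro z hz
          rcases hmm z hz with h1 | h1 | h
          · exact Or.inl ⟨(s,t), by simp, Or.inl h1⟩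
          · exact Or.inr ⟨(u,v), by simp, Or.inl h1⟩
          · rcases hmem z h with h' | h'
            · exact Or.inl (inPts_cons_of h')
            · exact Or.inr h'
        · have h1 := vU_le_fT φ γ s u
          simp only [sumU_cons, hAs]
          linarith
      · -- move the down pair to (t,v)
        have hkey : vD φ γ u v ≤ vD φ γ t v := by simp only [vD]; linarith
        have hD2 : Sys ((t,v) :: D') :=
          ⟨by intro p hp; rcases List.mem_cons.1 hp with rfl | hp'
              · exact htv
              · exact hD.1 p (List.mem_cons_of_mem _ hp'),
           List.isChain_cons.2 ⟨hDhead, hD'.2⟩⟩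
        obtain ⟨l', hc, hmem, hsum⟩ := IH φ U' ((t,v) :: D') (by simp only [List.length_cons]; omega) hU' hD2
        have hzb : ∀ z ∈ l', t ≤ z := by
          intro z hz
          rcases hmem z hz with h | h
          · exact hUlb z h
          · exact sys_pts_lb (c := t) hD2 (by intro p hp; simp only [List.head?_cons, Option.mem_def, Option.some.injEq] at hp; subst hp; exact le_rfl) z h
        obtain ⟨m, hcm, hmm, hms⟩ :=
          exists_cons_pair (fT φ γ) (fT_nonneg φ γ) s t hst l' hc hzb
        refine ⟨m, hcm, ?_, ?_⟩
        · intro z hz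
          rcases hmm z hz with h1 | h1 | h
          · exact Or.inl ⟨(s,t), by simp, Or.inl h1⟩
          · exact Or.inl ⟨(s,t), by simp, Or.inr h1⟩
          · rcases hmem z h with h' | h'
            · exact Or.inl (inPts_cons_of h')
            · rcases inPts_cons_elim h' with (h2 | h2) | h''
              · exact Or.inl ⟨(s,t), by simp, Or.inr h2⟩
              · exact Or.inr ⟨(u,v), by simp, Or.inr h2⟩
              · exact Or.inr (inPts_cons_of h'')
        · have h1 := vU_le_fT φ γ s t
          have h2 : vD φ γ t v ≤ max (vD φ γ t v) 0 := le_max_left _ _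
          simp only [sumU_cons, sumD_cons, hAs, hBs] at *
          linarith

lemma sys_nil : Sys ([] : List (ℝ × ℝ)) := ⟨by simp, List.isChain_nil⟩

lemma main (γ : ℝ → ℝ) (hγ : ∀ x, 0 ≤ γ x) :
    ∀ (N : ℕ) (φ : ℝ → ℝ) (U D : List (ℝ × ℝ)),
      U.length + D.length ≤ N → Sys U → Sys D → Goal φ γ U D := by
  intro N
  induction N with
  | zero =>
    intro φ U D hlen hU hD
    have h1 : U = [] := List.length_eq_zero_iff.1 (by omega)
    have h2 : D = [] := List.length_eq_zero_iff.1 (by omega)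
    subst h1; subst h2
    exact ⟨[], List.isChain_nil, by simp, by simp⟩
  | succ N IH =>
    intro φ U D hlen hU hD
    rcases U with _ | ⟨⟨s,t⟩, U'⟩
    · rcases D with _ | ⟨⟨u,v⟩, D'⟩
      · exact ⟨[], List.isChain_nil, by simp, by simp⟩
      · -- consume the first down pair
        have hD' : Sys D' := sys_tail hD
        have huv : u < v := hD.1 (u,v) (by simp)
        have hDlb : ∀ x, InPts x D' → v ≤ x :=
          sys_pts_lb hD' (List.isChain_cons.1 hD.2).1
        obtain ⟨l', hc, hmem, hsum⟩ :=
          IH φ [] D' (by simp only [List.length_cons] at hlen ⊢; simp at hlen ⊢; omega)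
            sys_nil hD'
        have hzb : ∀ z ∈ l', v ≤ z := by
          intro z hz
          rcases hmem z hz with h | h
          · obtain ⟨q, hq, -⟩ := h; simp at hq
          · exact hDlb z h
        obtain ⟨m, hcm, hmm, hms⟩ :=
          exists_cons_pair (fT φ γ) (fT_nonneg φ γ) u v huv l' hc hzb
        refine ⟨m, hcm, ?_, ?_⟩
        · intro z hz
          rcases hmm z hz with h1 | h1 | h
          · exact Or.inr ⟨(u,v), by simp, Or.inl h1⟩
          · exact Or.inr ⟨(u,v), by simp, Or.inr h1⟩
          · rcases hmem z h with h' | h'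
            · obtain ⟨q, hq, -⟩ := h'; simp at hq
            · exact Or.inr (inPts_cons_of h')
        · have h1 := maxvD_le_fT φ γ u v
          simp only [sumU_nil, sumD_cons] at *
          linarith
    · rcases D with _ | ⟨⟨u,v⟩, D'⟩
      · -- consume the first up pair
        have hU' : Sys U' := sys_tail hU
        have hst : s < t := hU.1 (s,t) (by simp)
        have hUlb : ∀ x, InPts x U' → t ≤ x :=
          sys_pts_lb hU' (List.isChain_cons.1 hU.2).1
        obtain ⟨l', hc, hmem, hsum⟩ :=
          IH φ U' [] (by simp only [List.length_cons] at hlen ⊢; omega) hU' sys_nil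
        have hzb : ∀ z ∈ l', t ≤ z := by
          intro z hz
          rcases hmem z hz with h | h
          · exact hUlb z h
          · obtain ⟨q, hq, -⟩ := h; simp at hq
        obtain ⟨m, hcm, hmm, hms⟩ :=
          exists_cons_pair (fT φ γ) (fT_nonneg φ γ) s t hst l' hc hzb
        refine ⟨m, hcm, ?_, ?_⟩
        · intro z hz
          rcases hmm z hz with h1 | h1 | h
          · exact Or.inl ⟨(s,t), by simp, Or.inl h1⟩
          · exact Or.inl ⟨(s,t), by simp, Or.inr h1⟩
          · rcases hmem z h with h' | h'
            · exact Or.inl (inPts_cons_of h')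
            · obtain ⟨q, hq, -⟩ := h'; simp at hq
        · have h1 := maxvU_le_fT φ γ s t
          simp only [sumD_nil, sumU_cons] at *
          linarith
      · by_cases hA : vU φ γ s t ≤ 0
        · -- first up pair contributes nothing
          obtain ⟨l', hc, hmem, hsum⟩ :=
            IH φ U' ((u,v) :: D') (by simp only [List.length_cons] at hlen ⊢; omega)
              (sys_tail hU) hD
          refine ⟨l', hc, ?_, ?_⟩
          · intro z hz
            rcases hmem z hz with h | h
            · exact Or.inl (inPts_cons_of h)
            · exact Or.inr h
          · simp only [sumU_cons, max_eq_right hA]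
            linarith
        · by_cases hB : vD φ γ u v ≤ 0
          · obtain ⟨l', hc, hmem, hsum⟩ :=
              IH φ ((s,t) :: U') D' (by simp only [List.length_cons] at hlen ⊢; omega)
                hU (sys_tail hD)
            refine ⟨l', hc, ?_, ?_⟩
            · intro z hz
              rcases hmem z hz with h | h
              · exact Or.inl h
              · exact Or.inr (inPts_cons_of h)
            · simp only [sumD_cons, max_eq_right hB]
              linarith
          · push_neg at hA hB
            rcases le_total s u with hsu | hus
            · exact step γ hγ N IH φ s t u v U' D' hU hD
                (by simp only [List.length_cons] at hlen; omega) hsu hA hB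
            · have hres := step γ hγ N IH (fun x => -φ x) u v s t D' U' hD hU
                (by simp only [List.length_cons] at hlen; omega) hus
                (by rw [vU_neg]; exact hB) (by rw [vD_neg]; exact hA)
              obtain ⟨l, hc, hmem, hsum⟩ := hres
              refine ⟨l, hc, ?_, ?_⟩
              · intro z hz
                rcases hmem z hz with h | h
                · exact Or.inr h
                · exact Or.inl h
              · rw [sumU_neg, sumD_neg] at hsum
                rw [pairSum_congr (fT (fun x => -φ x) γ) (fT φ γ) l
                  (fun x _ y _ => fT_neg φ γ x y)] at hsum
                linarith

def isPart (a b : ℝ) (p : ℕ × (ℕ → ℝ)) : Prop :=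
  (∀ i, i < p.1 → p.2 i < p.2 (i + 1)) ∧ a ≤ p.2 0 ∧ p.2 p.1 ≤ b

lemma genVar_eq_subtype (F : ℝ → ℝ → ℝ) (a b : ℝ) :
    genVar F a b = ⨆ p : {p : ℕ × (ℕ → ℝ) // isPart a b p},
      ENNReal.ofReal (∑ i ∈ Finset.range p.1.1, F (p.1.2 i) (p.1.2 (i + 1))) := by
  unfold genVar
  apply le_antisymm
  · refine iSup_le fun n => iSup_le fun t => iSup_le fun h => ?_
    exact le_iSup_of_le ⟨(n, t), h⟩ le_rfl
  · refine iSup_le fun p => ?_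
    exact le_iSup_of_le p.1.1 (le_iSup_of_le p.1.2 (le_iSup_of_le p.2 le_rfl))

lemma part_nonempty (a b : ℝ) (hab : a ≤ b) :
    Nonempty {p : ℕ × (ℕ → ℝ) // isPart a b p} :=
  ⟨⟨(0, fun _ => a), ⟨fun i h => absurd h (by omega), le_rfl, hab⟩⟩⟩

lemma seq_mono {n : ℕ} {t : ℕ → ℝ} (h : ∀ i, i < n → t i < t (i + 1)) :
    ∀ i j, i ≤ j → j ≤ n → t i ≤ t j := by
  intro i j hij hjn
  induction j, hij using Nat.le_induction with
  | base => exact le_rfl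
  | succ j hij ih =>
    exact le_trans (ih (by omega)) (le_of_lt (h j (by omega)))

lemma sum_map_range (f : ℕ → ℝ) : ∀ n, ((List.range n).map f).sum = ∑ i ∈ Finset.range n, f i := by
  intro n
  induction n with
  | zero => simp
  | succ n ih =>
    rw [List.range_succ, List.map_append, List.sum_append, Finset.sum_range_succ, ih]
    simp

lemma sys_ofRange {n : ℕ} {t : ℕ → ℝ} (h : ∀ i, i < n → t i < t (i + 1)) :
    Sys ((List.range n).map fun i => (t i, t (i + 1))) := by
  constructor
  · intro p hp
    simp only [List.mem_map, List.mem_range] at hp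
    obtain ⟨i, hi, rfl⟩ := hp
    exact h i hi
  · show List.IsChain _ _
    rw [List.isChain_map]
    cases n with
    | zero => simp
    | succ n =>
      rw [List.isChain_range_succ]
      intro m _
      exact le_rfl

lemma inPts_ofRange {n : ℕ} {t : ℕ → ℝ} {x : ℝ}
    (hx : InPts x ((List.range n).map fun i => (t i, t (i + 1)))) :
    ∃ i, i ≤ n ∧ x = t i := by
  obtain ⟨p, hp, hor⟩ := hx
  simp only [List.mem_map, List.mem_range] at hp
  obtain ⟨i, hi, rfl⟩ := hp
  rcases hor with h | h
  · exact ⟨i, by omega, h⟩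
  · exact ⟨i + 1, by omega, h⟩

lemma sumU_ofRange (φ γ : ℝ → ℝ) (n : ℕ) (t : ℕ → ℝ) :
    sumU φ γ ((List.range n).map fun i => (t i, t (i + 1))) =
      ∑ i ∈ Finset.range n, max (vU φ γ (t i) (t (i + 1))) 0 := by
  unfold sumU
  rw [List.map_map]
  exact sum_map_range _ n

lemma sumD_ofRange (φ γ : ℝ → ℝ) (n : ℕ) (t : ℕ → ℝ) :
    sumD φ γ ((List.range n).map fun i => (t i, t (i + 1))) =
      ∑ i ∈ Finset.range n, max (vD φ γ (t i) (t (i + 1))) 0 := by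
  unfold sumD
  rw [List.map_map]
  exact sum_map_range _ n

lemma pairSum_eq_sum (F : ℝ → ℝ → ℝ) :
    ∀ (l : List ℝ) (x : ℝ), pairSum F (x :: l) =
      ∑ i ∈ Finset.range l.length, F ((x :: l).getD i 0) ((x :: l).getD (i + 1) 0) := by
  intro l
  induction l with
  | nil => intro x; simp
  | cons y l ih =>
    intro x
    rw [pairSum_cons_cons, ih y, List.length_cons, Finset.sum_range_succ']
    simp only [List.getD_cons_succ, List.getD_cons_zero]
    ring

lemma list_le_genVar (F : ℝ → ℝ → ℝ) (a b : ℝ) (hab : a ≤ b) (l : List ℝ)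
    (hl : l.Chain' (· < ·)) (hmem : ∀ x ∈ l, a ≤ x ∧ x ≤ b) :
    ENNReal.ofReal (pairSum F l) ≤ genVar F a b := by
  cases l with
  | nil =>
    simp only [pairSum_nil, ENNReal.ofReal_zero]
    exact zero_le
  | cons x l' =>
    set L := x :: l' with hL
    set n := l'.length with hn
    have hlen : L.length = n + 1 := by simp [hL, hn]
    have key : pairSum F L = ∑ i ∈ Finset.range n,
        F (L.getD (min i n) 0) (L.getD (min (i + 1) n) 0) := by
      rw [hL, pairSum_eq_sum, ← hn]
      apply Finset.sum_congr rfl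
      intro i hi
      rw [Finset.mem_range] at hi
      rw [min_eq_left (by omega : i ≤ n), min_eq_left (by omega : i + 1 ≤ n)]
    have hpart1 : ∀ i, i < n → L.getD (min i n) 0 < L.getD (min (i + 1) n) 0 := by
      intro i hi
      rw [min_eq_left (by omega : i ≤ n), min_eq_left (by omega : i + 1 ≤ n)]
      have hc := List.isChain_iff_getElem.1 hl i (by omega)
      rw [List.getD_eq_getElem L 0 (by omega : i < L.length),
        List.getD_eq_getElem L 0 (by omega : i + 1 < L.length)]
      simpa [List.get_eq_getElem] using hc
    have h0 : a ≤ L.getD (min 0 n) 0 := by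
      rw [min_eq_left (by omega : 0 ≤ n)]
      exact (hmem x (by simp [hL])).1
    have hnb : L.getD (min n n) 0 ≤ b := by
      rw [min_self, List.getD_eq_getElem L 0 (by omega : n < L.length)]
      exact (hmem _ (L.getElem_mem (by omega))).2
    rw [key]
    unfold genVar
    exact le_iSup_of_le n (le_iSup_of_le (fun i => L.getD (min i n) 0)
      (le_iSup_of_le ⟨hpart1, h0, hnb⟩ le_rfl))

lemma ptws_split (x c : ℝ) (hc : 0 ≤ c) :
    max (|x| - c) 0 = max (x - c) 0 + max (-x - c) 0 := by
  rcases le_total 0 x with h | h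
  · rw [abs_of_nonneg h, max_eq_right (by linarith : -x - c ≤ 0), add_zero]
  · rw [abs_of_nonpos h, max_eq_right (by linarith : x - c ≤ 0), zero_add]

lemma fT_eq (φ γ : ℝ → ℝ) (x y : ℝ) :
    fT φ γ x y = max (|φ y - φ x| - (γ x + γ y) / 2) 0 := by
  unfold fT vU vD
  congr 1
  rw [max_sub_sub_right]
  congr 1
  rw [abs_eq_max_neg]
  congr 1
  ring

lemma genVar_le_add (f g h : ℝ → ℝ → ℝ) (a b : ℝ)
    (hfg : ∀ s t, a ≤ s → s < t → f s t = g s t + h s t)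
    (hg : ∀ s t, 0 ≤ g s t) (hh : ∀ s t, 0 ≤ h s t) :
    genVar f a b ≤ genVar g a b + genVar h a b := by
  conv_lhs => unfold genVar
  refine iSup_le fun n => iSup_le fun t => iSup_le fun hP => ?_
  have hsum : ∑ i ∈ Finset.range n, f (t i) (t (i + 1)) =
      (∑ i ∈ Finset.range n, g (t i) (t (i + 1))) +
      ∑ i ∈ Finset.range n, h (t i) (t (i + 1)) := by
    rw [← Finset.sum_add_distrib]
    refine Finset.sum_congr rfl fun i hi => ?_
    rw [Finset.mem_range] at hi
    exact hfg _ _ (le_trans hP.2.1 (seq_mono hP.1 0 i (Nat.zero_le _) (by omega)))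
      (hP.1 i hi)
  rw [hsum, ENNReal.ofReal_add (Finset.sum_nonneg fun i _ => hg _ _)
    (Finset.sum_nonneg fun i _ => hh _ _)]
  refine add_le_add ?_ ?_
  · conv_rhs => unfold genVar
    exact le_iSup_of_le n (le_iSup_of_le t (le_iSup_of_le hP le_rfl))
  · conv_rhs => unfold genVar
    exact le_iSup_of_le n (le_iSup_of_le t (le_iSup_of_le hP le_rfl))

lemma add_le_genVar (φ γ : ℝ → ℝ) (hγ : ∀ x, 0 ≤ γ x)
    (f g h : ℝ → ℝ → ℝ) (a b : ℝ) (hab : a ≤ b)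
    (hgeq : ∀ s t, a ≤ s → s < t → g s t = max (vU φ γ s t) 0)
    (hheq : ∀ s t, a ≤ s → s < t → h s t = max (vD φ γ s t) 0)
    (hfeq : ∀ s t, a ≤ s → a ≤ t → f s t = fT φ γ s t) :
    genVar g a b + genVar h a b ≤ genVar f a b := by
  haveI := part_nonempty a b hab
  rw [genVar_eq_subtype g a b, genVar_eq_subtype h a b, ENNReal.iSup_add]
  refine iSup_le fun p => ?_
  rw [ENNReal.add_iSup]
  refine iSup_le fun q => ?_
  obtain ⟨⟨n, tp⟩, hp⟩ := p
  obtain ⟨⟨m, tq⟩, hq⟩ := q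
  set U := (List.range n).map fun i => (tp i, tp (i + 1)) with hUdef
  set D := (List.range m).map fun i => (tq i, tq (i + 1)) with hDdef
  have hU : Sys U := sys_ofRange hp.1
  have hD : Sys D := sys_ofRange hq.1
  obtain ⟨l, hcl, hmeml, hsums⟩ := main γ hγ (U.length + D.length) φ U D le_rfl hU hD
  have hpU : ∀ i, i ≤ n → a ≤ tp i ∧ tp i ≤ b := fun i hi =>
    ⟨le_trans hp.2.1 (seq_mono hp.1 0 i (Nat.zero_le _) hi),
     le_trans (seq_mono hp.1 i n hi le_rfl) hp.2.2⟩
  have hpD : ∀ i, i ≤ m → a ≤ tq i ∧ tq i ≤ b := fun i hi =>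
    ⟨le_trans hq.2.1 (seq_mono hq.1 0 i (Nat.zero_le _) hi),
     le_trans (seq_mono hq.1 i m hi le_rfl) hq.2.2⟩
  have hbound : ∀ x ∈ l, a ≤ x ∧ x ≤ b := by
    intro x hx
    rcases hmeml x hx with hm | hm
    · obtain ⟨i, hi, hxe⟩ := inPts_ofRange hm
      exact hxe ▸ hpU i hi
    · obtain ⟨i, hi, hxe⟩ := inPts_ofRange hm
      exact hxe ▸ hpD i hi
  have hSp : (∑ i ∈ Finset.range n, g (tp i) (tp (i + 1))) = sumU φ γ U := by
    rw [hUdef, sumU_ofRange]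
    refine Finset.sum_congr rfl fun i hi => ?_
    rw [Finset.mem_range] at hi
    exact hgeq _ _ (hpU i (by omega)).1 (hp.1 i hi)
  have hSq : (∑ i ∈ Finset.range m, h (tq i) (tq (i + 1))) = sumD φ γ D := by
    rw [hDdef, sumD_ofRange]
    refine Finset.sum_congr rfl fun i hi => ?_
    rw [Finset.mem_range] at hi
    exact hheq _ _ (hpD i (by omega)).1 (hq.1 i hi)
  have hl2 : pairSum (fT φ γ) l = pairSum f l :=
    pairSum_congr _ _ l fun x hx y hy =>
      (hfeq x y (hbound x hx).1 (hbound y hy).1).symm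
  have hnn1 : 0 ≤ ∑ i ∈ Finset.range n, g (tp i) (tp (i + 1)) := by
    rw [hSp]; exact sumU_nonneg _ _ _
  have hnn2 : 0 ≤ ∑ i ∈ Finset.range m, h (tq i) (tq (i + 1)) := by
    rw [hSq]; exact sumD_nonneg _ _ _
  calc ENNReal.ofReal (∑ i ∈ Finset.range n, g (tp i) (tp (i + 1))) +
        ENNReal.ofReal (∑ i ∈ Finset.range m, h (tq i) (tq (i + 1)))
      = ENNReal.ofReal ((∑ i ∈ Finset.range n, g (tp i) (tp (i + 1))) +
          ∑ i ∈ Finset.range m, h (tq i) (tq (i + 1))) :=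
        (ENNReal.ofReal_add hnn1 hnn2).symm
    _ ≤ ENNReal.ofReal (pairSum f l) := by
        apply ENNReal.ofReal_le_ofReal
        rw [hSp, hSq, ← hl2]
        exact hsums
    _ ≤ genVar f a b := list_le_genVar f a b hab l hcl hbound

lemma vUmax_eq (ψ α β : ℝ → ℝ) (s t : ℝ) (hs : α s ≤ β s) (ht : α t ≤ β t) :
    max ((ψ t - (α t + β t) / 2) - (ψ s - (α s + β s) / 2)
      - ((β t - α t) + (β s - α s)) / 2) 0
    = max (vU (fun x => ψ x - (α x + β x) / 2) (fun x => max (β x - α x) 0) s t) 0 := by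
  have h1 : max (β s - α s) 0 = β s - α s := max_eq_left (by linarith)
  have h2 : max (β t - α t) 0 = β t - α t := max_eq_left (by linarith)
  simp only [vU, h1, h2]
  congr 1
  ring

lemma vDmax_eq (ψ α β : ℝ → ℝ) (s t : ℝ) (hs : α s ≤ β s) (ht : α t ≤ β t) :
    max ((ψ s - (α s + β s) / 2) - (ψ t - (α t + β t) / 2)
      - ((β t - α t) + (β s - α s)) / 2) 0
    = max (vD (fun x => ψ x - (α x + β x) / 2) (fun x => max (β x - α x) 0) s t) 0 := by
  have h1 : max (β s - α s) 0 = β s - α s := max_eq_left (by linarith)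
  have h2 : max (β t - α t) 0 = β t - α t := max_eq_left (by linarith)
  simp only [vD, h1, h2]
  congr 1
  ring

lemma fTmax_eq (ψ α β : ℝ → ℝ) (s t : ℝ) (hs : α s ≤ β s) (ht : α t ≤ β t) :
    max (|(ψ t - (α t + β t) / 2) - (ψ s - (α s + β s) / 2)|
      - ((β t - α t) + (β s - α s)) / 2) 0
    = fT (fun x => ψ x - (α x + β x) / 2) (fun x => max (β x - α x) 0) s t := by
  have h1 : max (β s - α s) 0 = β s - α s := max_eq_left (by linarith)
  have h2 : max (β t - α t) 0 = β t - α t := max_eq_left (by linarith)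
  rw [fT_eq]
  simp only [h1, h2]
  congr 1
  ring

lemma split_eq (ψ α β : ℝ → ℝ) (s t : ℝ) (hs : α s ≤ β s) (ht : α t ≤ β t) :
    max (|(ψ t - (α t + β t) / 2) - (ψ s - (α s + β s) / 2)|
      - ((β t - α t) + (β s - α s)) / 2) 0
    = max ((ψ t - (α t + β t) / 2) - (ψ s - (α s + β s) / 2)
        - ((β t - α t) + (β s - α s)) / 2) 0
      + max ((ψ s - (α s + β s) / 2) - (ψ t - (α t + β t) / 2)
        - ((β t - α t) + (β s - α s)) / 2) 0 := by
  rw [ptws_split _ _ (by linarith : (0:ℝ) ≤ ((β t - α t) + (β s - α s)) / 2)]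
  congr 1
  ring

end Stmt7Aux

/-- for regulated `ψ, α, β` with `α ≤ β`, the α,β-truncated
variation splits as the sum of the upward and downward ones. -/
theorem stmt7 (ψ α β : ℝ → ℝ)
    (hψ : Regulated 0 ψ) (hα : Regulated 0 α) (hβ : Regulated 0 β)
    (hαβ : ∀ t, 0 ≤ t → α t ≤ β t)
    (a b : ℝ) (ha : 0 ≤ a) (hab : a < b) :
    TVab ψ α β a b = UTVab ψ α β a b + DTVab ψ α β a b := by
  refine le_antisymm ?_ ?_
  · refine Stmt7Aux.genVar_le_add _ _ _ a b ?_
      (fun s t => le_max_right _ _) (fun s t => le_max_right _ _)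
    intro s t hs hst
    exact Stmt7Aux.split_eq ψ α β s t (hαβ s (le_trans ha hs))
      (hαβ t (le_trans ha (le_trans hs hst.le)))
  · refine Stmt7Aux.add_le_genVar (fun x => ψ x - (α x + β x) / 2)
      (fun x => max (β x - α x) 0) (fun x => le_max_right _ _)
      _ _ _ a b hab.le ?_ ?_ ?_
    · intro s t hs hst
      exact Stmt7Aux.vUmax_eq ψ α β s t (hαβ s (le_trans ha hs))
        (hαβ t (le_trans ha (le_trans hs hst.le)))
    · intro s t hs hst
      exact Stmt7Aux.vDmax_eq ψ α β s t (hαβ s (le_trans ha hs))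
        (hαβ t (le_trans ha (le_trans hs hst.le)))
    · intro s t hs ht
      exact Stmt7Aux.fTmax_eq ψ α β s t (hαβ s (le_trans ha hs))
        (hαβ t (le_trans ha ht))
end

section
/- Let t₀ ≥ 0 and let ψ, α, β : [t₀,∞) → ℝ be regulated functions with α ≤ β pointwise. If γ₀ := inf_{t ≥ t₀} (β(t) − α(t)) > 0, then TV^{α,β}(ψ,[t₀,t]) < ∞ for every t ≥ t₀. -/
open Filter Set Topology
open scoped ENNReal

private lemma mono_pts {n : ℕ} {t : ℕ → ℝ} (ht : ∀ i, i < n → t i < t (i + 1))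
    {i j : ℕ} (hij : i ≤ j) (hjn : j ≤ n) : t i ≤ t j := by
  induction j, hij using Nat.le_induction with
  | base => exact le_rfl
  | succ j hij ih =>
    exact le_trans (ih (by omega)) (le_of_lt (ht j (by omega)))

private lemma max_add_le {p q : ℝ} (hq : 0 ≤ q) : max (p + q) 0 ≤ max p 0 + q := by
  apply max_le
  · exact add_le_add_left (le_max_left p 0) q
  · have h0 : (0:ℝ) ≤ max p 0 := le_max_right p 0
    linarith

/-- Key splitting lemma: if truncated-variation sums on `[a,b]` are bounded by `M`,
and `f` oscillates by at most `c` on `(b,b')` with controlled jumps, then sums on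
`[a,b']` are bounded by `M + 2K`. -/
private lemma split (f : ℝ → ℝ) (c a b b' M K : ℝ) (hc : 0 ≤ c) (hbb' : b < b')
    (hM : 0 ≤ M) (hK : 0 ≤ K)
    (HM : ∀ n : ℕ, ∀ t : ℕ → ℝ, (∀ i, i < n → t i < t (i + 1)) → a ≤ t 0 → t n ≤ b →
      ∑ i ∈ Finset.range n, max (|f (t (i + 1)) - f (t i)| - c) 0 ≤ M)
    (H1 : ∀ u v : ℝ, b < u → b < v → u < b' → v < b' → |f v - f u| ≤ c)
    (H2 : ∀ v, b < v → v ≤ b' → |f v - f b| ≤ K)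
    (H3 : ∀ u, b < u → u < b' → |f b' - f u| ≤ K) :
    ∀ n : ℕ, ∀ t : ℕ → ℝ, (∀ i, i < n → t i < t (i + 1)) → a ≤ t 0 → t n ≤ b' →
      ∑ i ∈ Finset.range n, max (|f (t (i + 1)) - f (t i)| - c) 0 ≤ M + 2 * K := by
  intro n t ht h0 hn
  set g : ℕ → ℝ := fun i => max (|f (t (i + 1)) - f (t i)| - c) 0 with hg
  have glast : ∀ i, i < n → b < t i → g i ≤ K := by
    intro i hi hbi
    have h1 : t i < t (i + 1) := ht i hi
    have h2 : t (i + 1) ≤ b' := le_trans (mono_pts ht (by omega) le_rfl) hn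
    rcases lt_or_eq_of_le h2 with h2' | h2'
    · have := H1 (t i) (t (i + 1)) hbi (lt_trans hbi h1) (lt_trans h1 h2') h2'
      exact max_le (by linarith) hK
    · have h3 : |f b' - f (t i)| ≤ K := H3 (t i) hbi (h2' ▸ h1)
      show max (|f (t (i + 1)) - f (t i)| - c) 0 ≤ K
      rw [h2']
      exact max_le (by linarith) hK
  have gmid : ∀ i, i < n → b < t i → i + 1 < n → g i = 0 := by
    intro i hi hbi hi1
    have h1 : t i < t (i + 1) := ht i hi
    have h2 : t (i + 1) < b' :=
      lt_of_lt_of_le (lt_of_lt_of_le (ht (i + 1) hi1 |>.trans_le (mono_pts ht (by omega) le_rfl))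
        le_rfl) hn
    have := H1 (t i) (t (i + 1)) hbi (lt_trans hbi h1) (lt_trans h1 h2) h2
    exact max_eq_right (by linarith)
  by_cases hb0 : b < t 0
  · -- all points above b
    have hbd : ∀ i ∈ Finset.range n, g i ≤ if i = n - 1 then K else 0 := by
      intro i hi
      rw [Finset.mem_range] at hi
      have hbi : b < t i := lt_of_lt_of_le hb0 (mono_pts ht (Nat.zero_le _) (by omega))
      by_cases hie : i = n - 1
      · simp only [hie, if_pos rfl]
        exact glast _ (by omega) (lt_of_lt_of_le hb0 (mono_pts ht (Nat.zero_le _) (by omega)))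
      · simp only [hie, if_neg hie]
        exact le_of_eq (gmid i hi hbi (by omega))
    calc ∑ i ∈ Finset.range n, g i ≤ ∑ i ∈ Finset.range n, (if i = n - 1 then K else 0) :=
          Finset.sum_le_sum hbd
      _ = if n - 1 ∈ Finset.range n then K else 0 := by
          rw [Finset.sum_ite_eq' (Finset.range n) (n - 1) (fun _ => K)]
      _ ≤ M + 2 * K := by split_ifs <;> linarith
  · push_neg at hb0
    set k := Nat.findGreatest (fun i => t i ≤ b) n with hk
    have hkn : k ≤ n := Nat.findGreatest_le n
    have hkb : t k ≤ b := by
      rw [hk]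
      exact Nat.findGreatest_spec (P := fun i => t i ≤ b) (Nat.zero_le n) hb0
    have hgt : ∀ i, k < i → i ≤ n → b < t i := by
      intro i h1 h2
      rw [hk] at h1
      exact lt_of_not_ge (Nat.findGreatest_is_greatest (P := fun i => t i ≤ b) h1 h2)
    rcases eq_or_lt_of_le hkn with hkn' | hkn'
    · have := HM n t ht h0 (hkn' ▸ hkb)
      linarith
    · -- k < n : split the sum at k
      have hsplit : ∑ i ∈ Finset.range n, g i
          = ∑ i ∈ Finset.range k, g i + (g k + ∑ i ∈ Finset.Ico (k + 1) n, g i) := by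
        rw [← Finset.sum_range_add_sum_Ico g (le_of_lt hkn'),
          Finset.sum_eq_sum_Ico_succ_bot hkn' g]
      rw [hsplit]
      -- Bound the tail
      have htail : ∑ i ∈ Finset.Ico (k + 1) n, g i ≤ K := by
        have hbd : ∀ i ∈ Finset.Ico (k + 1) n, g i ≤ if i = n - 1 then K else 0 := by
          intro i hi
          rw [Finset.mem_Ico] at hi
          have hbi : b < t i := hgt i (by omega) (by omega)
          by_cases hie : i = n - 1
          · simp only [hie, if_pos rfl]
            exact glast _ (by omega) (hgt _ (by omega) (by omega))
          · simp only [if_neg hie]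
            exact le_of_eq (gmid i hi.2 hbi (by omega))
        calc ∑ i ∈ Finset.Ico (k + 1) n, g i
            ≤ ∑ i ∈ Finset.Ico (k + 1) n, (if i = n - 1 then K else 0) :=
              Finset.sum_le_sum hbd
          _ = if n - 1 ∈ Finset.Ico (k + 1) n then K else 0 := by
              rw [Finset.sum_ite_eq' _ (n - 1) (fun _ => K)]
          _ ≤ K := by split_ifs <;> linarith
      -- Bound the crossing term together with the head
      have hk1n : k + 1 ≤ n := hkn'
      have hK2 : |f (t (k + 1)) - f b| ≤ K :=
        H2 _ (hgt _ (by omega) hk1n) (le_trans (mono_pts ht hk1n le_rfl) hn)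
      have hcross : g k ≤ max (|f b - f (t k)| - c) 0 + K := by
        have htri : |f (t (k + 1)) - f (t k)| ≤ |f (t (k + 1)) - f b| + |f b - f (t k)| :=
          abs_sub_le _ _ _
        have : g k ≤ max ((|f b - f (t k)| - c) + K) 0 :=
          max_le_max (by linarith) le_rfl
        exact le_trans this (max_add_le hK)
      have hhead : ∑ i ∈ Finset.range k, g i + max (|f b - f (t k)| - c) 0 ≤ M := by
        rcases eq_or_lt_of_le hkb with hkb' | hkb'
        · have h1 : max (|f b - f (t k)| - c) 0 = 0 := by
            rw [hkb', sub_self, abs_zero, zero_sub]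
            exact max_eq_right (by linarith)
          rw [h1, add_zero]
          exact HM k t (fun i hi => ht i (by omega)) h0 hkb
        · set t' : ℕ → ℝ := fun i => if i ≤ k then t i else b with ht'
          have hcond1 : ∀ i, i < k + 1 → t' i < t' (i + 1) := by
            intro i hi
            have hik : i ≤ k := by omega
            simp only [ht']
            rcases lt_or_eq_of_le hik with h' | h'
            · rw [if_pos hik, if_pos (by omega : i + 1 ≤ k)]
              exact ht i (by omega)
            · rw [if_pos hik, if_neg (by omega : ¬ i + 1 ≤ k), h']
              exact hkb'
          have hcond2 : a ≤ t' 0 := by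
            simp only [ht']
            rw [if_pos (Nat.zero_le k)]
            exact h0
          have hcond3 : t' (k + 1) ≤ b := by
            simp only [ht']
            rw [if_neg (by omega : ¬ k + 1 ≤ k)]
          have key := HM (k + 1) t' hcond1 hcond2 hcond3
          have heq : ∑ i ∈ Finset.range (k + 1), max (|f (t' (i + 1)) - f (t' i)| - c) 0
              = ∑ i ∈ Finset.range k, g i + max (|f b - f (t k)| - c) 0 := by
            rw [Finset.sum_range_succ]
            congr 1
            · apply Finset.sum_congr rfl
              intro i hi
              rw [Finset.mem_range] at hi
              simp only [ht']
              rw [if_pos (by omega : i ≤ k), if_pos (by omega : i + 1 ≤ k)]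
            · simp only [ht']
              rw [if_pos (le_refl k), if_neg (by omega : ¬ k + 1 ≤ k)]
          rw [heq] at key
          exact key
      linarith

private lemma main_bound (a T : ℝ) (haT : a ≤ T) (f : ℝ → ℝ)
    (hr : ∀ x, a ≤ x → x < T → ∃ L, Tendsto f (𝓝[>] x) (𝓝 L))
    (hl : ∀ x, a < x → x ≤ T → ∃ L, Tendsto f (𝓝[<] x) (𝓝 L))
    (c : ℝ) (hc : 0 < c) :
    ∃ M : ℝ, ∀ n : ℕ, ∀ t : ℕ → ℝ, (∀ i, i < n → t i < t (i + 1)) → a ≤ t 0 → t n ≤ T →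
      ∑ i ∈ Finset.range n, max (|f (t (i + 1)) - f (t i)| - c) 0 ≤ M := by
  set P : ℝ → Prop := fun b => ∃ M : ℝ, 0 ≤ M ∧
    ∀ n : ℕ, ∀ t : ℕ → ℝ, (∀ i, i < n → t i < t (i + 1)) → a ≤ t 0 → t n ≤ b →
      ∑ i ∈ Finset.range n, max (|f (t (i + 1)) - f (t i)| - c) 0 ≤ M with hP
  have hPa : P a := by
    refine ⟨0, le_rfl, ?_⟩
    intro n t ht h0 hn
    match n with
    | 0 => simp
    | (m + 1) =>
      exfalso
      have h1 : t 0 ≤ t m := mono_pts ht (Nat.zero_le m) (by omega)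
      have h2 : t m < t (m + 1) := ht m (by omega)
      linarith
  set A : Set ℝ := {b | b ∈ Icc a T ∧ P b} with hA
  have haA : a ∈ A := ⟨⟨le_rfl, haT⟩, hPa⟩
  have hbdd : BddAbove A := ⟨T, fun x hx => hx.1.2⟩
  have hne : A.Nonempty := ⟨a, haA⟩
  set s := sSup A with hs
  have has : a ≤ s := le_csSup hbdd haA
  have hsT : s ≤ T := csSup_le hne (fun x hx => hx.1.2)
  -- Step 1: P s
  have hPs : P s := by
    rcases eq_or_lt_of_le has with has' | has'
    · exact has' ▸ hPa
    · obtain ⟨L, hL⟩ := hl s has' hsT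
      have hev : f ⁻¹' Metric.closedBall L (c / 2) ∈ 𝓝[<] s :=
        hL (Metric.closedBall_mem_nhds L (by linarith))
      rw [mem_nhdsLT_iff_exists_Ioo_subset] at hev
      obtain ⟨l, hls, hIoo⟩ := hev
      rw [mem_Iio] at hls
      have hball : ∀ x, l < x → x < s → |f x - L| ≤ c / 2 := by
        intro x h1 h2
        have := hIoo ⟨h1, h2⟩
        simpa [Metric.mem_closedBall, Real.dist_eq] using this
      obtain ⟨b, hbA, hlb⟩ := exists_lt_of_lt_csSup hne hls
      have hbs : b ≤ s := le_csSup hbdd hbA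
      rcases eq_or_lt_of_le hbs with hbs' | hbs'
      · exact hbs' ▸ hbA.2
      · obtain ⟨M, hM0, hM⟩ := hbA.2
        set K := |f s - L| + c with hKdef
        have hK0 : 0 ≤ K := by positivity
        refine ⟨M + 2 * K, by positivity, ?_⟩
        apply split f c a b s M K (le_of_lt hc) hbs' hM0 hK0 hM
        · intro u v hu hv hus hvs
          have h1 := hball u (lt_trans hlb hu) hus
          have h2 := hball v (lt_trans hlb hv) hvs
          have := abs_sub_le (f v) L (f u)
          rw [abs_sub_comm L (f u)] at this
          linarith
        · intro v hv hvs
          have hbb := hball b hlb hbs'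
          rcases eq_or_lt_of_le hvs with hvs' | hvs'
          · calc |f v - f b| ≤ |f v - L| + |f b - L| := by
                  have := abs_sub_le (f v) L (f b)
                  rw [abs_sub_comm L (f b)] at this; exact this
              _ ≤ K := by rw [hKdef, hvs']; linarith
          · have h1 := hball v (lt_trans hlb hv) hvs'
            have htri := abs_sub_le (f v) L (f b)
            rw [abs_sub_comm L (f b)] at htri
            calc |f v - f b| ≤ c := by linarith
              _ ≤ K := by rw [hKdef]; linarith [abs_nonneg (f s - L)]
        · intro u hu hus
          have h1 := hball u (lt_trans hlb hu) hus
          calc |f s - f u| ≤ |f s - L| + |f u - L| := by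
                have := abs_sub_le (f s) L (f u)
                rw [abs_sub_comm L (f u)] at this; exact this
            _ ≤ K := by rw [hKdef]; linarith
  -- Step 2: s = T
  have hsT' : s = T := by
    by_contra hne'
    have hsT2 : s < T := lt_of_le_of_ne hsT hne'
    obtain ⟨L, hL⟩ := hr s has hsT2
    have hev : f ⁻¹' Metric.closedBall L (c / 2) ∈ 𝓝[>] s :=
      hL (Metric.closedBall_mem_nhds L (by linarith))
    rw [mem_nhdsGT_iff_exists_Ioo_subset] at hev
    obtain ⟨r, hsr, hIoo⟩ := hev
    rw [mem_Ioi] at hsr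
    have hball : ∀ x, s < x → x < r → |f x - L| ≤ c / 2 := by
      intro x h1 h2
      have := hIoo ⟨h1, h2⟩
      simpa [Metric.mem_closedBall, Real.dist_eq] using this
    set b' := min T ((s + r) / 2) with hb'
    have hsb' : s < b' := lt_min hsT2 (by linarith)
    have hb'r : b' < r := lt_of_le_of_lt (min_le_right _ _) (by linarith)
    have hb'T : b' ≤ T := min_le_left _ _
    obtain ⟨M, hM0, hM⟩ := hPs
    set K := |f s - L| + c with hKdef
    have hK0 : 0 ≤ K := by positivity
    have hPb' : P b' := by
      refine ⟨M + 2 * K, by positivity, ?_⟩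
      apply split f c a s b' M K (le_of_lt hc) hsb' hM0 hK0 hM
      · intro u v hu hv hub hvb
        have h1 := hball u hu (lt_trans hub hb'r)
        have h2 := hball v hv (lt_trans hvb hb'r)
        have := abs_sub_le (f v) L (f u)
        rw [abs_sub_comm L (f u)] at this
        linarith
      · intro v hv hvb
        have h1 := hball v hv (lt_of_le_of_lt hvb hb'r)
        calc |f v - f s| ≤ |f v - L| + |f s - L| := by
              have := abs_sub_le (f v) L (f s)
              rw [abs_sub_comm L (f s)] at this; exact this
          _ ≤ K := by rw [hKdef]; linarith
      · intro u hu hub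
        have h1 := hball u hu (lt_trans hub hb'r)
        have h2 := hball b' hsb' hb'r
        have : |f b' - f u| ≤ c := by
          have := abs_sub_le (f b') L (f u)
          rw [abs_sub_comm L (f u)] at this
          linarith
        calc |f b' - f u| ≤ c := this
          _ ≤ K := by rw [hKdef]; linarith [abs_nonneg (f s - L)]
    have hb'A : b' ∈ A := ⟨⟨le_trans has (le_of_lt hsb'), hb'T⟩, hPb'⟩
    have := le_csSup hbdd hb'A
    linarith
  obtain ⟨M, _, hM⟩ := hPs
  exact ⟨M, by rw [hsT'] at hM; exact hM⟩

/-- if the gap `β - α` is bounded away from `0` on `[t₀,∞)`,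
then the α,β-truncated variation of a regulated `ψ` is finite on every
interval `[t₀,t]`. -/
theorem stmt8 (t₀ : ℝ) (ht₀ : 0 ≤ t₀) (ψ α β : ℝ → ℝ)
    (hψ : Regulated t₀ ψ) (hα : Regulated t₀ α) (hβ : Regulated t₀ β)
    (hαβ : ∀ t, t₀ ≤ t → α t ≤ β t)
    (γ₀ : ℝ) (hγ₀ : 0 < γ₀) (hgap : ∀ t, t₀ ≤ t → γ₀ ≤ β t - α t) :
    ∀ t, t₀ ≤ t → TVab ψ α β t₀ t < ⊤ := by
  intro T hT
  set f : ℝ → ℝ := fun x => ψ x - (α x + β x) / 2 with hf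
  obtain ⟨M, hM⟩ := main_bound t₀ T hT f
    (by
      intro x hx _
      obtain ⟨Lψ, h1⟩ := hψ.1 x hx
      obtain ⟨Lα, h2⟩ := hα.1 x hx
      obtain ⟨Lβ, h3⟩ := hβ.1 x hx
      exact ⟨Lψ - (Lα + Lβ) / 2, h1.sub (((h2.add h3).div_const 2))⟩)
    (by
      intro x hx _
      obtain ⟨Lψ, h1⟩ := hψ.2 x hx
      obtain ⟨Lα, h2⟩ := hα.2 x hx
      obtain ⟨Lβ, h3⟩ := hβ.2 x hx
      exact ⟨Lψ - (Lα + Lβ) / 2, h1.sub (((h2.add h3).div_const 2))⟩)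
    γ₀ hγ₀
  have : TVab ψ α β t₀ T ≤ ENNReal.ofReal M := by
    rw [TVab, genVar]
    apply iSup_le; intro n
    apply iSup_le; intro t
    apply iSup_le; intro h
    obtain ⟨ht, h0, hn⟩ := h
    apply ENNReal.ofReal_le_ofReal
    calc ∑ i ∈ Finset.range n,
          max (|(ψ (t (i + 1)) - (α (t (i + 1)) + β (t (i + 1))) / 2)
                - (ψ (t i) - (α (t i) + β (t i)) / 2)|
              - ((β (t (i + 1)) - α (t (i + 1))) + (β (t i) - α (t i))) / 2) 0
        ≤ ∑ i ∈ Finset.range n, max (|f (t (i + 1)) - f (t i)| - γ₀) 0 := by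
          apply Finset.sum_le_sum
          intro i hi
          rw [Finset.mem_range] at hi
          have hti : t₀ ≤ t i := le_trans h0 (mono_pts ht (Nat.zero_le i) (by omega))
          have hti1 : t₀ ≤ t (i + 1) := le_trans h0 (mono_pts ht (Nat.zero_le _) (by omega))
          have g1 := hgap (t i) hti
          have g2 := hgap (t (i + 1)) hti1
          apply max_le_max _ le_rfl
          simp only [hf]
          linarith
      _ ≤ M := hM n t ht h0 hn
  exact lt_of_le_of_lt this ENNReal.ofReal_lt_top
end

section
/- Let u, α, β : [0,∞) → ℝ be regulated functions with α ≤ β pointwise, assume TV^{α,β}(u,[0,t]) < ∞ for every t ≥ 0, and let ξ⁰ ∈ [u(0) − β(0), u(0) − α(0)]. Then there exists a function ξ : [0,∞) → ℝ with ξ(0) = ξ⁰ and α(t) ≤ u(t) − ξ(t) ≤ β(t) for all t ≥ 0 such that for every t ≥ 0, TV^{α,β}(u,[0,t]) ≤ TV(ξ,[0,t]) ≤ TV^{α,β}(u,[0,t]) + β(0) − α(0). -/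
open Filter Set Topology
open scoped ENNReal

def cB (l r : ℝ → ℝ) (s t : ℝ) : ℝ := max (max (l t - r s) (l s - r t)) 0

noncomputable def Wv (l r : ℝ → ℝ) : ℝ → ℝ → ℝ≥0∞ := genVar (cB l r)

lemma cB_nonneg (l r : ℝ → ℝ) (s t : ℝ) : 0 ≤ cB l r s t := le_max_right _ _

lemma seq_le_of_inc {t : ℕ → ℝ} {n : ℕ} (h : ∀ i, i < n → t i < t (i+1)) :
    ∀ {i j : ℕ}, i ≤ j → j ≤ n → t i ≤ t j := by
  intro i j hij hj
  induction j with
  | zero => simp_all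
  | succ k ih =>
    rcases Nat.eq_or_lt_of_le hij with rfl | hlt
    · exact le_rfl
    · exact le_trans (ih (Nat.lt_succ_iff.mp hlt) (le_trans (Nat.le_succ k) hj))
        (le_of_lt (h k (Nat.lt_of_succ_le hj)))

lemma sum_le_genVar {f : ℝ → ℝ → ℝ} {a b : ℝ} {n : ℕ} {t : ℕ → ℝ}
    (h : (∀ i, i < n → t i < t (i + 1)) ∧ a ≤ t 0 ∧ t n ≤ b) :
    ENNReal.ofReal (∑ i ∈ Finset.range n, f (t i) (t (i + 1))) ≤ genVar f a b := by
  exact le_iSup_of_le n (le_iSup_of_le t (le_iSup_of_le h le_rfl))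

lemma pair_le_genVar {f : ℝ → ℝ → ℝ} {a b x y : ℝ} (hx : a ≤ x) (hxy : x < y) (hyb : y ≤ b) :
    ENNReal.ofReal (f x y) ≤ genVar f a b := by
  have := sum_le_genVar (f := f) (a := a) (b := b) (n := 1)
    (t := fun i => if i = 0 then x else y) ?_
  · simpa using this
  · refine ⟨?_, by simpa using hx, by simpa using hyb⟩
    intro i hi
    interval_cases i
    simpa using hxy

lemma r_lb {l r : ℝ → ℝ} (hlr : l 0 ≤ r 0) {T : ℝ} (hfin : Wv l r 0 T ≠ ⊤)
    {v : ℝ} (hv : v ∈ Set.Icc 0 T) : l 0 - (Wv l r 0 T).toReal ≤ r v := by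
  have h0 : (0:ℝ≥0∞).toReal ≤ (Wv l r 0 T).toReal := by
    exact ENNReal.toReal_mono hfin zero_le
  simp only [ENNReal.toReal_zero] at h0
  rcases eq_or_lt_of_le hv.1 with rfl | hv0
  · linarith
  · have hp : ENNReal.ofReal (cB l r 0 v) ≤ Wv l r 0 T :=
      pair_le_genVar le_rfl hv0 hv.2
    have := (ENNReal.ofReal_le_iff_le_toReal hfin).mp hp
    have hc : l 0 - r v ≤ cB l r 0 v :=
      le_trans (le_max_right _ _) (le_max_left _ _)
    linarith

lemma l_ub {l r : ℝ → ℝ} (hlr : l 0 ≤ r 0) {T : ℝ} (hfin : Wv l r 0 T ≠ ⊤)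
    {v : ℝ} (hv : v ∈ Set.Icc 0 T) : l v ≤ r 0 + (Wv l r 0 T).toReal := by
  have h0 : (0:ℝ≥0∞).toReal ≤ (Wv l r 0 T).toReal := ENNReal.toReal_mono hfin zero_le
  simp only [ENNReal.toReal_zero] at h0
  rcases eq_or_lt_of_le hv.1 with rfl | hv0
  · linarith
  · have hp : ENNReal.ofReal (cB l r 0 v) ≤ Wv l r 0 T :=
      pair_le_genVar le_rfl hv0 hv.2
    have := (ENNReal.ofReal_le_iff_le_toReal hfin).mp hp
    have hc : l v - r 0 ≤ cB l r 0 v :=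
      le_trans (le_max_left _ _) (le_max_left _ _)
    linarith

noncomputable def mm (r : ℝ → ℝ) (s t : ℝ) : ℝ := sInf (r '' Set.Icc s t)
noncomputable def AA (l r : ℝ → ℝ) (t : ℝ) : ℝ :=
  sSup ((fun s => min (l s) (mm r s t)) '' Set.Icc 0 t)
noncomputable def xi (l r : ℝ → ℝ) (x0 t : ℝ) : ℝ := max (AA l r t) (min x0 (mm r 0 t))

section basic
variable {l r : ℝ → ℝ} {T Ml Mu : ℝ}

lemma bddBelow_r (Hlb : ∀ v ∈ Set.Icc 0 T, Ml ≤ r v) {s e : ℝ} (hs : 0 ≤ s) (he : e ≤ T) :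
    BddBelow (r '' Set.Icc s e) := by
  refine ⟨Ml, ?_⟩
  rintro y ⟨v, hv, rfl⟩
  exact Hlb v ⟨le_trans hs hv.1, le_trans hv.2 he⟩

lemma mm_le (Hlb : ∀ v ∈ Set.Icc 0 T, Ml ≤ r v) {s e v : ℝ} (hs : 0 ≤ s) (he : e ≤ T)
    (hv : v ∈ Set.Icc s e) : mm r s e ≤ r v :=
  csInf_le (bddBelow_r Hlb hs he) ⟨v, hv, rfl⟩

lemma le_mm {s e c : ℝ} (hse : s ≤ e) (h : ∀ v ∈ Set.Icc s e, c ≤ r v) : c ≤ mm r s e := by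
  refine le_csInf ((Set.nonempty_Icc.mpr hse).image r) ?_
  rintro y ⟨v, hv, rfl⟩
  exact h v hv

lemma mm_anti (Hlb : ∀ v ∈ Set.Icc 0 T, Ml ≤ r v) {s e e' : ℝ} (hs : 0 ≤ s) (h1 : s ≤ e)
    (h2 : e ≤ e') (hT : e' ≤ T) : mm r s e' ≤ mm r s e :=
  csInf_le_csInf (bddBelow_r Hlb hs hT) ((Set.nonempty_Icc.mpr h1).image r)
    (Set.image_mono (Set.Icc_subset_Icc le_rfl h2))

lemma bddAbove_Aset (Hub : ∀ v ∈ Set.Icc 0 T, l v ≤ Mu) {t : ℝ} (ht : t ≤ T) :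
    BddAbove ((fun s => min (l s) (mm r s t)) '' Set.Icc 0 t) := by
  refine ⟨Mu, ?_⟩
  rintro y ⟨v, hv, rfl⟩
  exact le_trans (min_le_left _ _) (Hub v ⟨hv.1, le_trans hv.2 ht⟩)

lemma le_AA (Hub : ∀ v ∈ Set.Icc 0 T, l v ≤ Mu) {t s : ℝ} (ht : t ≤ T)
    (hs : s ∈ Set.Icc 0 t) : min (l s) (mm r s t) ≤ AA l r t :=
  le_csSup (bddAbove_Aset Hub ht) ⟨s, hs, rfl⟩

lemma mm_self {t : ℝ} : mm r t t = r t := by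
  simp [mm, Set.Icc_self]

lemma xi_lb' (Hub : ∀ v ∈ Set.Icc 0 T, l v ≤ Mu) (hlr : ∀ v ∈ Set.Icc 0 T, l v ≤ r v)
    {x0 t : ℝ} (ht : t ∈ Set.Icc 0 T) : l t ≤ xi l r x0 t := by
  have h1 : min (l t) (mm r t t) ≤ AA l r t := le_AA Hub ht.2 ⟨ht.1, le_rfl⟩
  rw [mm_self, min_eq_left (hlr t ht)] at h1
  exact le_trans h1 (le_max_left _ _)

lemma xi_ub (Hlb : ∀ v ∈ Set.Icc 0 T, Ml ≤ r v) {x0 t : ℝ} (ht : t ∈ Set.Icc 0 T) :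
    xi l r x0 t ≤ r t := by
  refine max_le ?_ ?_
  · refine csSup_le ((Set.nonempty_Icc.mpr ht.1).image _) ?_
    rintro y ⟨s, hs, rfl⟩
    exact le_trans (min_le_right _ _) (mm_le Hlb hs.1 ht.2 ⟨hs.2, le_rfl⟩)
  · exact le_trans (min_le_right _ _) (mm_le Hlb le_rfl ht.2 ⟨ht.1, le_rfl⟩)

lemma xi_zero {x0 : ℝ} (h1 : l 0 ≤ x0) (h2 : x0 ≤ r 0) : xi l r x0 0 = x0 := by
  have hA : AA l r 0 = l 0 := by
    simp [AA, Set.Icc_self, mm_self, min_eq_left (le_trans h1 h2)]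
  rw [xi, hA, mm_self, min_eq_left h2, max_eq_right h1]

lemma crossing_up (Hlb : ∀ v ∈ Set.Icc 0 T, Ml ≤ r v) (Hub : ∀ v ∈ Set.Icc 0 T, l v ≤ Mu)
    {x0 s e ε : ℝ} (hs0 : 0 ≤ s) (hse : s < e) (heT : e ≤ T)
    (h : xi l r x0 s < xi l r x0 e) (hε : 0 < ε) :
    ∃ w, s < w ∧ w ≤ e ∧ xi l r x0 e - ε < l w := by
  have hsT : s ≤ T := le_trans hse.le heT
  have hBe : min x0 (mm r 0 e) ≤ xi l r x0 s :=
    le_trans (min_le_min le_rfl (mm_anti Hlb le_rfl hs0 hse.le heT)) (le_max_right _ _)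
  have hAe : xi l r x0 e = AA l r e := by
    rcases max_cases (AA l r e) (min x0 (mm r 0 e)) with ⟨h1, _⟩ | ⟨h1, _⟩
    · exact h1
    · exfalso
      have h2 : xi l r x0 e = min x0 (mm r 0 e) := by rw [xi, h1]
      rw [h2] at h
      exact absurd h (not_lt.mpr hBe)
  set ε' := min ε (xi l r x0 e - xi l r x0 s) with hε'def
  have hε' : 0 < ε' := lt_min hε (by linarith)
  have hlt : xi l r x0 e - ε' < AA l r e := by rw [← hAe]; linarith
  obtain ⟨y, ⟨s', hs', rfl⟩, hy⟩ :=
    exists_lt_of_lt_csSup ((Set.nonempty_Icc.mpr (le_trans hs0 hse.le)).image _) hlt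
  by_cases hss' : s' ≤ s
  · exfalso
    have h1 : min (l s') (mm r s' e) ≤ min (l s') (mm r s' s) :=
      min_le_min le_rfl (mm_anti Hlb hs'.1 hss' hse.le heT)
    have h2 : min (l s') (mm r s' s) ≤ AA l r s := le_AA Hub hsT ⟨hs'.1, hss'⟩
    have h3 : AA l r s ≤ xi l r x0 s := le_max_left _ _
    have h4 : ε' ≤ xi l r x0 e - xi l r x0 s := min_le_right _ _
    linarith
  · push_neg at hss'
    refine ⟨s', hss', hs'.2, ?_⟩
    have : min (l s') (mm r s' e) ≤ l s' := min_le_left _ _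
    have h4 : ε' ≤ ε := min_le_left _ _
    linarith

lemma crossing_down (Hlb : ∀ v ∈ Set.Icc 0 T, Ml ≤ r v) (Hub : ∀ v ∈ Set.Icc 0 T, l v ≤ Mu)
    {x0 s e ε : ℝ} (hs0 : 0 ≤ s) (hse : s < e) (heT : e ≤ T)
    (h : xi l r x0 e < xi l r x0 s) (hε : 0 < ε) :
    ∃ w, s < w ∧ w ≤ e ∧ r w < xi l r x0 e + ε := by
  by_contra hcon
  push_neg at hcon
  have hsT : s ≤ T := le_trans hse.le heT
  have h0e : (0:ℝ) ≤ e := le_trans hs0 hse.le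
  set ξe := xi l r x0 e with hξe
  -- key: for s' ≤ s, min (mm r s' s) (ξe + ε) ≤ mm r s' e
  have key : ∀ s', 0 ≤ s' → s' ≤ s → min (mm r s' s) (ξe + ε) ≤ mm r s' e := by
    intro s' h0s' hs's
    refine le_mm (le_trans hs's hse.le) ?_
    intro v hv
    rcases le_or_gt v s with hvs | hvs
    · exact le_trans (min_le_left _ _) (mm_le Hlb h0s' hsT ⟨hv.1, hvs⟩)
    · exact le_trans (min_le_right _ _) (hcon v hvs hv.2)
  have hAse : AA l r s ≤ ξe := by
    refine csSup_le ((Set.nonempty_Icc.mpr hs0).image _) ?_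
    rintro y ⟨s', hs', rfl⟩
    by_contra hy
    push_neg at hy
    have h1 : min (min (l s') (mm r s' s)) (ξe + ε) ≤ min (l s') (mm r s' e) := by
      refine le_min (le_trans (min_le_left _ _) (min_le_left _ _)) ?_
      exact le_trans (min_le_min (min_le_right _ _) le_rfl) (key s' hs'.1 hs'.2)
    have h2 : min (l s') (mm r s' e) ≤ AA l r e := le_AA Hub heT ⟨hs'.1, le_trans hs'.2 hse.le⟩
    have h3 : AA l r e ≤ ξe := le_max_left _ _
    have h4 : ξe < min (min (l s') (mm r s' s)) (ξe + ε) := lt_min hy (by linarith)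
    linarith
  have hBse : min x0 (mm r 0 s) ≤ ξe := by
    by_contra hy
    push_neg at hy
    have h1 : min (min x0 (mm r 0 s)) (ξe + ε) ≤ min x0 (mm r 0 e) := by
      refine le_min (le_trans (min_le_left _ _) (min_le_left _ _)) ?_
      exact le_trans (min_le_min (min_le_right _ _) le_rfl) (key 0 le_rfl hs0)
    have h3 : min x0 (mm r 0 e) ≤ ξe := le_max_right _ _
    have h4 : ξe < min (min x0 (mm r 0 s)) (ξe + ε) := lt_min hy (by linarith)
    linarith
  have : xi l r x0 s ≤ ξe := max_le hAse hBse
  rw [hξe] at this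
  exact absurd h (not_lt.mpr this)

end basic

noncomputable def Dsum (g : ℝ → ℝ) (s : ℕ → ℝ) (i : ℕ) : ℝ :=
  ∑ j ∈ Finset.range i, |g (s (j + 1)) - g (s j)|

noncomputable def Csum (l r : ℝ → ℝ) (w : ℕ → ℝ) (p : ℕ) : ℝ :=
  ∑ k ∈ Finset.range p, cB l r (w k) (w (k + 1))

lemma Dsum_zero (g : ℝ → ℝ) (s : ℕ → ℝ) : Dsum g s 0 = 0 := by simp [Dsum]

lemma Dsum_succ (g : ℝ → ℝ) (s : ℕ → ℝ) (i : ℕ) :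
    Dsum g s (i + 1) = Dsum g s i + |g (s (i + 1)) - g (s i)| := Finset.sum_range_succ _ i

lemma Csum_zero (l r : ℝ → ℝ) (w : ℕ → ℝ) : Csum l r w 0 = 0 := by simp [Csum]

lemma Csum_succ (l r : ℝ → ℝ) (w : ℕ → ℝ) (p : ℕ) :
    Csum l r w (p + 1) = Csum l r w p + cB l r (w p) (w (p + 1)) := Finset.sum_range_succ _ p

lemma Csum_congr {l r : ℝ → ℝ} {w w2 : ℕ → ℝ} {p : ℕ} (h : ∀ k, k ≤ p → w2 k = w k) :
    Csum l r w2 p = Csum l r w p := by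
  refine Finset.sum_congr rfl ?_
  intro k hk
  simp only [Finset.mem_range] at hk
  rw [h k (by omega), h (k + 1) (by omega)]

set_option maxHeartbeats 2000000 in
theorem upper_anchored {l r : ℝ → ℝ} {T x0 : ℝ}
    (hlrT : ∀ v ∈ Set.Icc 0 T, l v ≤ r v)
    (hfin : Wv l r 0 T ≠ ⊤) (hx1 : l 0 ≤ x0) (hx2 : x0 ≤ r 0)
    {n : ℕ} {s : ℕ → ℝ} (hinc : ∀ i, i < n → s i < s (i + 1)) (hs0 : s 0 = 0) (hsn : s n ≤ T)
    {ε : ℝ} (hε : 0 < ε) :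
    Dsum (xi l r x0) s n ≤ (Wv l r 0 T).toReal + (r 0 - l 0) + (2 * n + 1) * ε := by
  have hT0 : (0:ℝ) ≤ T := by
    have := seq_le_of_inc hinc (Nat.zero_le n) le_rfl
    rw [hs0] at this; linarith
  have hlr0 : l 0 ≤ r 0 := hlrT 0 ⟨le_rfl, hT0⟩
  have hWnn : (0:ℝ) ≤ (Wv l r 0 T).toReal := ENNReal.toReal_nonneg
  have Hlb : ∀ v ∈ Set.Icc 0 T, l 0 - (Wv l r 0 T).toReal ≤ r v := fun v hv => r_lb hlr0 hfin hv
  have Hub : ∀ v ∈ Set.Icc 0 T, l v ≤ r 0 + (Wv l r 0 T).toReal := fun v hv => l_ub hlr0 hfin hv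
  have hsmem : ∀ i, i ≤ n → s i ∈ Set.Icc (0:ℝ) T := by
    intro i hi
    constructor
    · have := seq_le_of_inc hinc (Nat.zero_le i) hi; rw [hs0] at this; linarith
    · exact le_trans (seq_le_of_inc hinc hi le_rfl) hsn
  set ξf : ℝ → ℝ := xi l r x0 with hξf
  have hInv : ∀ i, i ≤ n →
      ((Dsum ξf s i = 0 ∧ ξf (s i) = x0) ∨
       (∃ p w, w 0 = 0 ∧ (∀ k, k < p + 1 → w k < w (k + 1)) ∧ w (p + 1) ≤ s i ∧
          ξf (s i) - ε ≤ l (w (p + 1)) ∧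
          Dsum ξf s i ≤ Csum l r w p + (ξf (s i) - r (w p)) + (r 0 - l 0) + 2 * i * ε) ∨
       (∃ p w, w 0 = 0 ∧ (∀ k, k < p + 1 → w k < w (k + 1)) ∧ w (p + 1) ≤ s i ∧
          r (w (p + 1)) ≤ ξf (s i) + ε ∧
          Dsum ξf s i ≤ Csum l r w p + (l (w p) - ξf (s i)) + (r 0 - l 0) + 2 * i * ε)) := by
    intro i
    induction i with
    | zero =>
      intro _
      exact Or.inl ⟨Dsum_zero _ _, by rw [hξf, hs0, xi_zero hx1 hx2]⟩
    | succ i ih =>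
      intro hi1
      have hi : i ≤ n := Nat.le_of_succ_le hi1
      have hIH := ih hi
      have h0si : 0 ≤ s i := (hsmem i hi).1
      have hsiT : s (i + 1) ≤ T := (hsmem (i + 1) hi1).2
      have hss : s i < s (i + 1) := hinc i hi1
      have hDsucc : Dsum ξf s (i + 1) = Dsum ξf s i + |ξf (s (i + 1)) - ξf (s i)| :=
        Dsum_succ _ _ i
      rcases lt_trichotomy (ξf (s i)) (ξf (s (i + 1))) with hdir | hdir | hdir
      · -- upward move
        obtain ⟨w', hw'1, hw'2, hw'3⟩ := crossing_up Hlb Hub h0si hss hsiT hdir hε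
        have hw'pos : 0 < w' := lt_of_le_of_lt h0si hw'1
        have habs : |ξf (s (i + 1)) - ξf (s i)| = ξf (s (i + 1)) - ξf (s i) :=
          abs_of_pos (by linarith)
        rcases hIH with ⟨hD0, hX0⟩ | ⟨p, w, hw0, hwinc, hwle, hside, hbound⟩ |
          ⟨p, w, hw0, hwinc, hwle, hside, hbound⟩
        · -- I → U with p = 0
          right; left
          obtain ⟨w2, hw2⟩ : ∃ w2 : ℕ → ℝ, ∀ k, w2 k = if k = 0 then 0 else w' :=
            ⟨_, fun k => rfl⟩
          have e0 : w2 0 = 0 := by rw [hw2 0, if_pos rfl]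
          have e1 : w2 1 = w' := by rw [hw2 1, if_neg one_ne_zero]
          refine ⟨0, w2, e0, ?_, ?_, ?_, ?_⟩
          · intro k hk
            have hk0 : k = 0 := by omega
            rw [hk0, e0, e1]; exact hw'pos
          · rw [e1]; exact hw'2
          · rw [e1]; exact hw'3.le
          · rw [hDsucc, habs, hD0, hX0, Csum_zero, e0]
            push_cast
            nlinarith [hε.le]
        · -- U → U : replace last point
          right; left
          obtain ⟨w2, hw2⟩ : ∃ w2 : ℕ → ℝ, ∀ k, w2 k = if k = p + 1 then w' else w k :=
            ⟨_, fun k => rfl⟩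
          have elast : w2 (p + 1) = w' := by rw [hw2, if_pos rfl]
          have eother : ∀ k, k ≤ p → w2 k = w k := by
            intro k hk; rw [hw2, if_neg (by omega)]
          refine ⟨p, w2, ?_, ?_, ?_, ?_, ?_⟩
          · rw [eother 0 (by omega)]; exact hw0
          · intro k hk
            rcases Nat.lt_or_ge k p with hkp | hkp
            · rw [eother k (by omega), eother (k + 1) (by omega)]; exact hwinc k (by omega)
            · have hkeq : k = p := by omega
              rw [hkeq, eother p le_rfl, elast]
              have h1 : w p < w (p + 1) := hwinc p (by omega)
              linarith
          · rw [elast]; exact hw'2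
          · rw [elast]; exact hw'3.le
          · rw [hDsucc, habs, Csum_congr eother, eother p le_rfl]
            push_cast
            nlinarith [hε.le]
        · -- D → U : append new point
          right; left
          obtain ⟨w2, hw2⟩ : ∃ w2 : ℕ → ℝ, ∀ k, w2 k = if k = p + 2 then w' else w k :=
            ⟨_, fun k => rfl⟩
          have elast : w2 (p + 2) = w' := by rw [hw2, if_pos rfl]
          have eother : ∀ k, k ≤ p + 1 → w2 k = w k := by
            intro k hk; rw [hw2, if_neg (by omega)]
          refine ⟨p + 1, w2, ?_, ?_, ?_, ?_, ?_⟩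
          · rw [eother 0 (by omega)]; exact hw0
          · intro k hk
            rcases Nat.lt_or_ge k (p + 1) with hkp | hkp
            · rw [eother k (by omega), eother (k + 1) (by omega)]; exact hwinc k hkp
            · have hkeq : k = p + 1 := by omega
              rw [hkeq, eother (p + 1) le_rfl, elast]
              linarith
          · rw [elast]; exact hw'2
          · rw [elast]; exact hw'3.le
          · have hCeq : Csum l r w2 (p + 1) = Csum l r w p + cB l r (w p) (w (p + 1)) := by
              rw [Csum_succ, Csum_congr (fun k hk => eother k (by omega)),
                eother p (by omega), eother (p + 1) le_rfl]
            have hcb : l (w p) - r (w (p + 1)) ≤ cB l r (w p) (w (p + 1)) :=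
              le_trans (le_max_right _ _) (le_max_left _ _)
            rw [hDsucc, habs, hCeq, eother (p + 1) le_rfl]
            push_cast
            nlinarith [hε.le]
      · -- no move
        have habs : |ξf (s (i + 1)) - ξf (s i)| = 0 := by rw [hdir]; simp
        rcases hIH with ⟨hD0, hX0⟩ | ⟨p, w, hw0, hwinc, hwle, hside, hbound⟩ |
          ⟨p, w, hw0, hwinc, hwle, hside, hbound⟩
        · left; exact ⟨by rw [hDsucc, habs, hD0]; ring, by rw [← hdir]; exact hX0⟩
        · right; left
          refine ⟨p, w, hw0, hwinc, le_trans hwle hss.le, by rw [← hdir]; exact hside, ?_⟩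
          rw [hDsucc, habs, ← hdir]
          push_cast
          nlinarith [hε.le]
        · right; right
          refine ⟨p, w, hw0, hwinc, le_trans hwle hss.le, by rw [← hdir]; exact hside, ?_⟩
          rw [hDsucc, habs, ← hdir]
          push_cast
          nlinarith [hε.le]
      · -- downward move
        obtain ⟨w', hw'1, hw'2, hw'3⟩ := crossing_down Hlb Hub h0si hss hsiT hdir hε
        have hw'pos : 0 < w' := lt_of_le_of_lt h0si hw'1
        have habs : |ξf (s (i + 1)) - ξf (s i)| = ξf (s i) - ξf (s (i + 1)) := by
          rw [abs_of_neg (by linarith : ξf (s (i + 1)) - ξf (s i) < 0)]; ring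
        rcases hIH with ⟨hD0, hX0⟩ | ⟨p, w, hw0, hwinc, hwle, hside, hbound⟩ |
          ⟨p, w, hw0, hwinc, hwle, hside, hbound⟩
        · -- I → D with p = 0
          right; right
          obtain ⟨w2, hw2⟩ : ∃ w2 : ℕ → ℝ, ∀ k, w2 k = if k = 0 then 0 else w' :=
            ⟨_, fun k => rfl⟩
          have e0 : w2 0 = 0 := by rw [hw2 0, if_pos rfl]
          have e1 : w2 1 = w' := by rw [hw2 1, if_neg one_ne_zero]
          refine ⟨0, w2, e0, ?_, ?_, ?_, ?_⟩
          · intro k hk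
            have hk0 : k = 0 := by omega
            rw [hk0, e0, e1]; exact hw'pos
          · rw [e1]; exact hw'2
          · rw [e1]; exact hw'3.le
          · rw [hDsucc, habs, hD0, hX0, Csum_zero, e0]
            push_cast
            nlinarith [hε.le]
        · -- U → D : append new point
          right; right
          obtain ⟨w2, hw2⟩ : ∃ w2 : ℕ → ℝ, ∀ k, w2 k = if k = p + 2 then w' else w k :=
            ⟨_, fun k => rfl⟩
          have elast : w2 (p + 2) = w' := by rw [hw2, if_pos rfl]
          have eother : ∀ k, k ≤ p + 1 → w2 k = w k := by
            intro k hk; rw [hw2, if_neg (by omega)]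
          refine ⟨p + 1, w2, ?_, ?_, ?_, ?_, ?_⟩
          · rw [eother 0 (by omega)]; exact hw0
          · intro k hk
            rcases Nat.lt_or_ge k (p + 1) with hkp | hkp
            · rw [eother k (by omega), eother (k + 1) (by omega)]; exact hwinc k hkp
            · have hkeq : k = p + 1 := by omega
              rw [hkeq, eother (p + 1) le_rfl, elast]
              linarith
          · rw [elast]; exact hw'2
          · rw [elast]; exact hw'3.le
          · have hCeq : Csum l r w2 (p + 1) = Csum l r w p + cB l r (w p) (w (p + 1)) := by
              rw [Csum_succ, Csum_congr (fun k hk => eother k (by omega)),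
                eother p (by omega), eother (p + 1) le_rfl]
            have hcb : l (w (p + 1)) - r (w p) ≤ cB l r (w p) (w (p + 1)) :=
              le_trans (le_max_left _ _) (le_max_left _ _)
            rw [hDsucc, habs, hCeq, eother (p + 1) le_rfl]
            push_cast
            nlinarith [hε.le]
        · -- D → D : replace last point
          right; right
          obtain ⟨w2, hw2⟩ : ∃ w2 : ℕ → ℝ, ∀ k, w2 k = if k = p + 1 then w' else w k :=
            ⟨_, fun k => rfl⟩
          have elast : w2 (p + 1) = w' := by rw [hw2, if_pos rfl]
          have eother : ∀ k, k ≤ p → w2 k = w k := by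
            intro k hk; rw [hw2, if_neg (by omega)]
          refine ⟨p, w2, ?_, ?_, ?_, ?_, ?_⟩
          · rw [eother 0 (by omega)]; exact hw0
          · intro k hk
            rcases Nat.lt_or_ge k p with hkp | hkp
            · rw [eother k (by omega), eother (k + 1) (by omega)]; exact hwinc k (by omega)
            · have hkeq : k = p := by omega
              rw [hkeq, eother p le_rfl, elast]
              have h1 : w p < w (p + 1) := hwinc p (by omega)
              linarith
          · rw [elast]; exact hw'2
          · rw [elast]; exact hw'3.le
          · rw [hDsucc, habs, Csum_congr eother, eother p le_rfl]
            push_cast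
            nlinarith [hε.le]
  -- finalize
  have hWsum : ∀ (p : ℕ) (w : ℕ → ℝ), w 0 = 0 → (∀ k, k < p + 1 → w k < w (k + 1)) →
      w (p + 1) ≤ s n → Csum l r w p + cB l r (w p) (w (p + 1)) ≤ (Wv l r 0 T).toReal := by
    intro p w hw0 hwinc hwle
    have hadm : (∀ k, k < p + 1 → w k < w (k + 1)) ∧ (0:ℝ) ≤ w 0 ∧ w (p + 1) ≤ T :=
      ⟨hwinc, le_of_eq hw0.symm, le_trans hwle hsn⟩
    have h1 := sum_le_genVar (f := cB l r) (a := 0) (b := T) (n := p + 1) (t := w) hadm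
    rw [Finset.sum_range_succ] at h1
    have h2 := (ENNReal.ofReal_le_iff_le_toReal hfin).mp h1
    exact h2
  rcases hInv n le_rfl with ⟨hD0, _⟩ | ⟨p, w, hw0, hwinc, hwle, hside, hbound⟩ |
    ⟨p, w, hw0, hwinc, hwle, hside, hbound⟩
  · rw [hD0]
    have hn : (0:ℝ) ≤ (n:ℝ) := Nat.cast_nonneg n
    nlinarith [hε.le, hlr0, hWnn]
  · have hcb : l (w (p + 1)) - r (w p) ≤ cB l r (w p) (w (p + 1)) :=
      le_trans (le_max_left _ _) (le_max_left _ _)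
    have hW := hWsum p w hw0 hwinc hwle
    push_cast
    nlinarith [hε.le]
  · have hcb : l (w p) - r (w (p + 1)) ≤ cB l r (w p) (w (p + 1)) :=
      le_trans (le_max_right _ _) (le_max_left _ _)
    have hW := hWsum p w hw0 hwinc hwle
    push_cast
    nlinarith [hε.le]

theorem upper_all {l r : ℝ → ℝ} {T x0 : ℝ}
    (hlrT : ∀ v ∈ Set.Icc 0 T, l v ≤ r v)
    (hfin : Wv l r 0 T ≠ ⊤) (hx1 : l 0 ≤ x0) (hx2 : x0 ≤ r 0)
    {n : ℕ} {s : ℕ → ℝ} (hinc : ∀ i, i < n → s i < s (i + 1)) (hs0 : 0 ≤ s 0) (hsn : s n ≤ T)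
    {ε : ℝ} (hε : 0 < ε) :
    Dsum (xi l r x0) s n ≤ (Wv l r 0 T).toReal + (r 0 - l 0) + (2 * (n + 1) + 1) * ε := by
  rcases eq_or_lt_of_le hs0 with h0 | h0
  · have := upper_anchored hlrT hfin hx1 hx2 hinc h0.symm hsn hε
    have hn : (0:ℝ) ≤ (n:ℝ) := Nat.cast_nonneg n
    push_cast at this ⊢
    nlinarith [hε.le]
  · set s' : ℕ → ℝ := fun i => if i = 0 then 0 else s (i - 1) with hs'
    have hs'0 : s' 0 = 0 := by simp [hs']
    have hs'succ : ∀ j : ℕ, s' (j + 1) = s j := by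
      intro j; rw [hs']; simp
    have hinc' : ∀ i, i < n + 1 → s' i < s' (i + 1) := by
      intro i hi
      cases i with
      | zero => rw [hs'0, hs'succ]; exact h0
      | succ j => rw [hs'succ, hs'succ]; exact hinc j (by omega)
    have hsn' : s' (n + 1) ≤ T := by rw [hs'succ]; exact hsn
    have hle : Dsum (xi l r x0) s n ≤ Dsum (xi l r x0) s' (n + 1) := by
      rw [Dsum, Dsum, Finset.sum_range_succ']
      have he : ∀ j ∈ Finset.range n,
          |xi l r x0 (s' (j + 1 + 1)) - xi l r x0 (s' (j + 1))| =
          |xi l r x0 (s (j + 1)) - xi l r x0 (s j)| := by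
        intro j _; rw [hs'succ, hs'succ]
      rw [Finset.sum_congr rfl he]
      have : (0:ℝ) ≤ |xi l r x0 (s' (0 + 1)) - xi l r x0 (s' 0)| := abs_nonneg _
      linarith
    have hfinal := upper_anchored hlrT hfin hx1 hx2 hinc' hs'0 hsn' hε
    push_cast at hfinal ⊢
    linarith

theorem upper_TV {l r : ℝ → ℝ} {t x0 : ℝ}
    (hlrT : ∀ v ∈ Set.Icc 0 t, l v ≤ r v)
    (hfin : Wv l r 0 t ≠ ⊤) (hx1 : l 0 ≤ x0) (hx2 : x0 ≤ r 0) (ht : 0 ≤ t) :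
    TV (xi l r x0) 0 t ≤ Wv l r 0 t + ENNReal.ofReal (r 0 - l 0) := by
  have hlr0 : l 0 ≤ r 0 := hlrT 0 ⟨le_rfl, ht⟩
  rw [TV, genVar]
  refine iSup_le fun n => iSup_le fun s => iSup_le fun h => ?_
  obtain ⟨hinc, hs0, hsn⟩ := h
  have key : Dsum (xi l r x0) s n ≤ (Wv l r 0 t).toReal + (r 0 - l 0) := by
    refine le_of_forall_pos_le_add fun δ hδ => ?_
    have hden : (0:ℝ) < 2 * (n + 1) + 1 := by positivity
    have hε : (0:ℝ) < δ / (2 * (n + 1) + 1) := by positivity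
    have := upper_all hlrT hfin hx1 hx2 hinc hs0 hsn hε
    have heq : (2 * ((n:ℝ) + 1) + 1) * (δ / (2 * (n + 1) + 1)) = δ := by
      field_simp
    push_cast at this
    rw [heq] at this
    linarith
  calc ENNReal.ofReal (∑ i ∈ Finset.range n, |xi l r x0 (s (i + 1)) - xi l r x0 (s i)|)
      ≤ ENNReal.ofReal ((Wv l r 0 t).toReal + (r 0 - l 0)) := ENNReal.ofReal_le_ofReal key
    _ = Wv l r 0 t + ENNReal.ofReal (r 0 - l 0) := by
        rw [ENNReal.ofReal_add ENNReal.toReal_nonneg (by linarith), ENNReal.ofReal_toReal hfin]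

theorem lower_TV {l r : ℝ → ℝ} {t x0 : ℝ}
    (hbound : ∀ v ∈ Set.Icc 0 t, l v ≤ xi l r x0 v ∧ xi l r x0 v ≤ r v) (ht : 0 ≤ t) :
    Wv l r 0 t ≤ TV (xi l r x0) 0 t := by
  rw [Wv, genVar]
  refine iSup_le fun n => iSup_le fun s => iSup_le fun h => ?_
  obtain ⟨hinc, hs0, hsn⟩ := h
  have hsum : (∑ i ∈ Finset.range n, cB l r (s i) (s (i + 1))) ≤
      ∑ i ∈ Finset.range n, |xi l r x0 (s (i + 1)) - xi l r x0 (s i)| := by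
    refine Finset.sum_le_sum ?_
    intro i hi
    simp only [Finset.mem_range] at hi
    have hmem : ∀ j, j ≤ n → s j ∈ Set.Icc (0:ℝ) t := by
      intro j hj
      constructor
      · exact le_trans hs0 (seq_le_of_inc hinc (Nat.zero_le j) hj)
      · exact le_trans (seq_le_of_inc hinc hj le_rfl) hsn
    obtain ⟨ha1, ha2⟩ := hbound (s i) (hmem i (by omega))
    obtain ⟨hb1, hb2⟩ := hbound (s (i + 1)) (hmem (i + 1) (by omega))
    refine max_le (max_le ?_ ?_) (abs_nonneg _)
    · have : l (s (i + 1)) - r (s i) ≤ xi l r x0 (s (i + 1)) - xi l r x0 (s i) := by linarith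
      exact le_trans this (le_abs_self _)
    · have : l (s i) - r (s (i + 1)) ≤ -(xi l r x0 (s (i + 1)) - xi l r x0 (s i)) := by linarith
      exact le_trans this (neg_le_abs _)
  exact le_trans (ENNReal.ofReal_le_ofReal hsum)
    (sum_le_genVar (f := fun a b => |xi l r x0 b - xi l r x0 a|) ⟨hinc, hs0, hsn⟩)

theorem play_exists {l r : ℝ → ℝ} (hlr : ∀ v, 0 ≤ v → l v ≤ r v)
    (hfin : ∀ t, 0 ≤ t → Wv l r 0 t < ⊤) {x0 : ℝ} (h1 : l 0 ≤ x0) (h2 : x0 ≤ r 0) :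
    ∃ ξ : ℝ → ℝ, ξ 0 = x0 ∧ (∀ t, 0 ≤ t → l t ≤ ξ t ∧ ξ t ≤ r t) ∧
      (∀ t, 0 ≤ t → Wv l r 0 t ≤ TV ξ 0 t ∧
        TV ξ 0 t ≤ Wv l r 0 t + ENNReal.ofReal (r 0 - l 0)) := by
  refine ⟨xi l r x0, xi_zero h1 h2, ?_, ?_⟩
  · intro t ht
    have hfin' : Wv l r 0 t ≠ ⊤ := (hfin t ht).ne
    have hlr0 : l 0 ≤ r 0 := hlr 0 le_rfl
    constructor
    · exact xi_lb' (fun v hv => l_ub hlr0 hfin' hv) (fun v hv => hlr v hv.1) ⟨ht, le_rfl⟩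
    · exact xi_ub (fun v hv => r_lb hlr0 hfin' hv) ⟨ht, le_rfl⟩
  · intro t ht
    have hfin' : Wv l r 0 t ≠ ⊤ := (hfin t ht).ne
    have hlr0 : l 0 ≤ r 0 := hlr 0 le_rfl
    constructor
    · refine lower_TV ?_ ht
      intro v hv
      exact ⟨xi_lb' (fun v hv => l_ub hlr0 hfin' hv) (fun v hv => hlr v hv.1) hv,
        xi_ub (fun v hv => r_lb hlr0 hfin' hv) hv⟩
    · exact upper_TV (fun v hv => hlr v hv.1) hfin' h1 h2 ht

/-- existence of an output `ξ` of the play operator with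
starting point `ξ⁰`, staying in the band, whose total variation is bounded
below by `TV^{α,β}(u,[0,t])` and above by `TV^{α,β}(u,[0,t]) + β(0) - α(0)`. -/
theorem stmt10 (u α β : ℝ → ℝ)
    (hu : Regulated 0 u) (hα : Regulated 0 α) (hβ : Regulated 0 β)
    (hαβ : ∀ t, 0 ≤ t → α t ≤ β t)
    (hfin : ∀ t, 0 ≤ t → TVab u α β 0 t < ⊤)
    (ξ₀ : ℝ) (hξ₀ : u 0 - β 0 ≤ ξ₀ ∧ ξ₀ ≤ u 0 - α 0) :
    ∃ ξ : ℝ → ℝ, ξ 0 = ξ₀ ∧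
      (∀ t, 0 ≤ t → α t ≤ u t - ξ t ∧ u t - ξ t ≤ β t) ∧
      (∀ t, 0 ≤ t →
        TVab u α β 0 t ≤ TV ξ 0 t ∧
        TV ξ 0 t ≤ TVab u α β 0 t + ENNReal.ofReal (β 0 - α 0)) := by

  set l : ℝ → ℝ := fun x => u x - β x with hl
  set r : ℝ → ℝ := fun x => u x - α x with hr
  have hfeq : (fun s t =>
      max (|(u t - (α t + β t) / 2) - (u s - (α s + β s) / 2)|
          - ((β t - α t) + (β s - α s)) / 2) 0) = cB l r := by
    funext a b
    have h1 : l b - r a =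
        ((u b - (α b + β b) / 2) - (u a - (α a + β a) / 2)) -
          ((β b - α b) + (β a - α a)) / 2 := by
      rw [hl, hr]; ring
    have h2 : l a - r b =
        -((u b - (α b + β b) / 2) - (u a - (α a + β a) / 2)) -
          ((β b - α b) + (β a - α a)) / 2 := by
      rw [hl, hr]; ring
    rw [show cB l r a b = max (max (l b - r a) (l a - r b)) 0 from rfl]
    rcases abs_cases ((u b - (α b + β b) / 2) - (u a - (α a + β a) / 2)) with ⟨hX, hX2⟩ | ⟨hX, hX2⟩
    · have hle : l a - r b ≤ l b - r a := by rw [h1, h2]; linarith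
      rw [hX, ← h1, max_eq_left hle]
    · have hle : l b - r a ≤ l a - r b := by rw [h1, h2]; linarith
      rw [hX, ← h2, max_eq_right hle]
  have hW : TVab u α β = Wv l r := by rw [TVab, Wv, hfeq]
  have hlr : ∀ v, 0 ≤ v → l v ≤ r v := by
    intro v hv
    have := hαβ v hv
    rw [hl, hr]
    simp only []
    linarith
  have hfin' : ∀ t, 0 ≤ t → Wv l r 0 t < ⊤ := by
    intro t ht
    rw [← hW]
    exact hfin t ht
  have h1 : l 0 ≤ ξ₀ := hξ₀.1
  have h2 : ξ₀ ≤ r 0 := hξ₀.2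
  obtain ⟨ξ, hξ0, hband, hTV⟩ := play_exists hlr hfin' h1 h2
  refine ⟨ξ, hξ0, ?_, ?_⟩
  · intro t ht
    obtain ⟨hb1, hb2⟩ := hband t ht
    have hb1' : u t - β t ≤ ξ t := hb1
    have hb2' : ξ t ≤ u t - α t := hb2
    exact ⟨by linarith, by linarith⟩
  · intro t ht
    obtain ⟨hc1, hc2⟩ := hTV t ht
    have hofr : ENNReal.ofReal (β 0 - α 0) = ENNReal.ofReal (r 0 - l 0) := by
      congr 1
      rw [hl, hr]
      ring
    rw [hW, hofr]
    exact ⟨hc1, hc2⟩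
end

section
/- Let u : [0,∞) → ℝ be regulated, c > 0, ξ⁰ ∈ [u(0) − c/2, u(0) + c/2] and b > 0. Define c⁰, u^{ξ⁰} : [0,∞) → ℝ by c⁰(0) = 0, u^{ξ⁰}(0) = ξ⁰ and c⁰(t) = c/2, u^{ξ⁰}(t) = u(t) for t > 0. Then UTV^{−c⁰,c⁰}(u^{ξ⁰},[0,b]) = sup over n ≥ 1 and 0 < t₁ < t₂ < ⋯ < tₙ ≤ b of { (u(t₁) − ξ⁰ − c/2)₊ + Σ_{i=2}^{n} (u(tᵢ) − u(tᵢ₋₁) − c)₊ }, and DTV^{−c⁰,c⁰}(u^{ξ⁰},[0,b]) = sup over n ≥ 1 and 0 < t₁ < ⋯ < tₙ ≤ b of { (ξ⁰ − u(t₁) − c/2)₊ + Σ_{i=2}^{n} (u(tᵢ₋₁) − u(tᵢ) − c)₊ }. -/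
open Filter Set Topology
open scoped ENNReal

private lemma chain_mono (t : ℕ → ℝ) (n : ℕ)
    (h : ∀ i, 1 ≤ i → i < n → t i < t (i + 1)) :
    ∀ j, j ≤ n → ∀ i, 1 ≤ i → i ≤ j → t i ≤ t j := by
  intro j
  induction j with
  | zero => intro _ i hi hij; omega
  | succ k ih =>
    intro hk i hi hij
    rcases Nat.lt_or_ge i (k + 1) with hlt | hge
    · have h1 : t i ≤ t k := ih (by omega) i hi (by omega)
      exact h1.trans (le_of_lt (h k (by omega) (by omega)))
    · have hik : i = k + 1 := le_antisymm hij hge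
      simp [hik]

private lemma key (b : ℝ) (w W : ℝ → ℝ → ℝ) (F : ℝ → ℝ)
    (hF : ∀ t, 0 ≤ F t)
    (hwF : ∀ t, 0 < t → w 0 t = F t)
    (hwW : ∀ s t, 0 < s → 0 < t → w s t = W s t) :
    genVar w 0 b =
      ⨆ (n : ℕ) (_ : 1 ≤ n) (t : ℕ → ℝ)
        (_ : (∀ i, 1 ≤ i → i < n → t i < t (i + 1)) ∧ 0 < t 1 ∧ t n ≤ b),
        ENNReal.ofReal (F (t 1) + ∑ i ∈ Finset.Ico 1 n, W (t i) (t (i + 1))) := by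
  apply le_antisymm
  · refine iSup_le fun n => iSup_le fun t => iSup_le fun h => ?_
    obtain ⟨hmono, ht0, htn⟩ := h
    rcases Nat.eq_zero_or_pos n with rfl | hn
    · simp
    rcases eq_or_lt_of_le ht0 with h0 | h0
    · -- t 0 = 0
      have hpos : ∀ i, 1 ≤ i → i ≤ n → 0 < t i := by
        intro i hi hin
        have h1 : t 0 < t 1 := hmono 0 hn
        have h2 := chain_mono t n (fun i _ hi2 => hmono i hi2) i hin 1 le_rfl hi
        linarith
      have hsum : ∑ i ∈ Finset.range n, w (t i) (t (i + 1)) =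
          F (t 1) + ∑ i ∈ Finset.Ico 1 n, W (t i) (t (i + 1)) := by
        rw [Finset.range_eq_Ico, Finset.sum_eq_sum_Ico_succ_bot hn]
        congr 1
        · rw [← h0, hwF (t 1) (hpos 1 le_rfl hn)]
        · refine Finset.sum_congr rfl fun i hi => ?_
          rw [Finset.mem_Ico] at hi
          exact hwW _ _ (hpos i hi.1 (le_of_lt hi.2)) (hpos (i + 1) (by omega) hi.2)
      rw [hsum]
      exact le_iSup_of_le n (le_iSup_of_le hn (le_iSup_of_le t
        (le_iSup_of_le ⟨fun i _ hi => hmono i hi, hpos 1 le_rfl hn, htn⟩ le_rfl)))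
    · -- 0 < t 0
      have hpos : ∀ i, i ≤ n → 0 < t i := by
        intro i hin
        rcases Nat.eq_zero_or_pos i with rfl | hi
        · exact h0
        · have h2 := chain_mono t n (fun i _ hi2 => hmono i hi2) i hin 1 le_rfl hi
          have h1 : t 0 < t 1 := hmono 0 (by omega)
          linarith
      set s : ℕ → ℝ := fun i => t (i - 1) with hs
      have hcond : (∀ i, 1 ≤ i → i < n + 1 → s i < s (i + 1)) ∧ 0 < s 1 ∧ s (n + 1) ≤ b := by
        refine ⟨fun i hi hin => ?_, h0, htn⟩
        have h2 := hmono (i - 1) (by omega)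
        simp only [hs]
        have heq : i + 1 - 1 = (i - 1) + 1 := by omega
        rw [heq]
        exact h2
      have hsum : ∑ i ∈ Finset.range n, w (t i) (t (i + 1)) ≤
          F (s 1) + ∑ i ∈ Finset.Ico 1 (n + 1), W (s i) (s (i + 1)) := by
        have hre : ∑ i ∈ Finset.Ico 1 (n + 1), W (s i) (s (i + 1)) =
            ∑ i ∈ Finset.range n, W (t i) (t (i + 1)) := by
          rw [Finset.sum_Ico_eq_sum_range]
          simp only [Nat.add_sub_cancel]
          refine Finset.sum_congr rfl fun i _ => ?_
          simp only [hs]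
          have e1 : 1 + i - 1 = i := by omega
          have e2 : 1 + i + 1 - 1 = i + 1 := by omega
          rw [e1, e2]
        have heq : ∑ i ∈ Finset.range n, w (t i) (t (i + 1)) =
            ∑ i ∈ Finset.range n, W (t i) (t (i + 1)) := by
          refine Finset.sum_congr rfl fun i hi => ?_
          rw [Finset.mem_range] at hi
          exact hwW _ _ (hpos i (by omega)) (hpos (i + 1) (by omega))
        rw [hre, heq]
        have := hF (s 1)
        linarith
      exact le_iSup_of_le (n + 1) (le_iSup_of_le (by omega) (le_iSup_of_le s
        (le_iSup_of_le hcond (ENNReal.ofReal_le_ofReal hsum))))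
  · refine iSup_le fun n => iSup_le fun hn => iSup_le fun t => iSup_le fun h => ?_
    obtain ⟨hmono, ht1, htn⟩ := h
    have hpos : ∀ i, 1 ≤ i → i ≤ n → 0 < t i := by
      intro i hi hin
      have h2 := chain_mono t n hmono i hin 1 le_rfl hi
      linarith
    set s : ℕ → ℝ := fun i => if i = 0 then 0 else t i with hs
    have hcond : (∀ i, i < n → s i < s (i + 1)) ∧ (0:ℝ) ≤ s 0 ∧ s n ≤ b := by
      refine ⟨fun i hi => ?_, by simp [hs], ?_⟩
      · rcases Nat.eq_zero_or_pos i with rfl | hipos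
        · simpa [hs] using ht1
        · have : i ≠ 0 := by omega
          simp only [hs, this, if_false, Nat.succ_ne_zero]
          exact hmono i hipos hi
      · have : n ≠ 0 := by omega
        simpa [hs, this] using htn
    have hsum : ∑ i ∈ Finset.range n, w (s i) (s (i + 1)) =
        F (t 1) + ∑ i ∈ Finset.Ico 1 n, W (t i) (t (i + 1)) := by
      rw [Finset.range_eq_Ico, Finset.sum_eq_sum_Ico_succ_bot hn]
      congr 1
      · have : s 0 = 0 ∧ s 1 = t 1 := by constructor <;> simp [hs]
        rw [this.1, this.2, hwF (t 1) ht1]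
      · refine Finset.sum_congr rfl fun i hi => ?_
        rw [Finset.mem_Ico] at hi
        have hi0 : i ≠ 0 := by omega
        have hi1 : i + 1 ≠ 0 := by omega
        simp only [hs, hi0, hi1, if_false]
        exact hwW _ _ (hpos i hi.1 (by omega)) (hpos (i + 1) (by omega) hi.2)
    exact le_iSup_of_le n (le_iSup_of_le s (le_iSup_of_le hcond (le_of_eq (by rw [hsum]))))

/-- explicit formulas for the upward and downward truncated
variations `UTV^{-c⁰,c⁰}(u^{ξ⁰},[0,b])` and `DTV^{-c⁰,c⁰}(u^{ξ⁰},[0,b])`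
in terms of partitions `0 < t₁ < ⋯ < tₙ ≤ b`. -/
theorem stmt12 (u : ℝ → ℝ) (hu : Regulated 0 u)
    (c : ℝ) (hc : 0 < c)
    (ξ₀ : ℝ) (hξ₀ : u 0 - c / 2 ≤ ξ₀ ∧ ξ₀ ≤ u 0 + c / 2)
    (b : ℝ) (hb : 0 < b)
    (c₀ u₀ : ℝ → ℝ)
    (hc₀ : c₀ 0 = 0 ∧ ∀ t, 0 < t → c₀ t = c / 2)
    (hu₀ : u₀ 0 = ξ₀ ∧ ∀ t, 0 < t → u₀ t = u t) :
    UTVab u₀ (fun t => -c₀ t) c₀ 0 b =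
      (⨆ (n : ℕ) (_ : 1 ≤ n) (t : ℕ → ℝ)
        (_ : (∀ i, 1 ≤ i → i < n → t i < t (i + 1)) ∧ 0 < t 1 ∧ t n ≤ b),
        ENNReal.ofReal (max (u (t 1) - ξ₀ - c / 2) 0 +
          ∑ i ∈ Finset.Ico 1 n, max (u (t (i + 1)) - u (t i) - c) 0)) ∧
    DTVab u₀ (fun t => -c₀ t) c₀ 0 b =
      (⨆ (n : ℕ) (_ : 1 ≤ n) (t : ℕ → ℝ)
        (_ : (∀ i, 1 ≤ i → i < n → t i < t (i + 1)) ∧ 0 < t 1 ∧ t n ≤ b),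
        ENNReal.ofReal (max (ξ₀ - u (t 1) - c / 2) 0 +
          ∑ i ∈ Finset.Ico 1 n, max (u (t i) - u (t (i + 1)) - c) 0)) := by
  obtain ⟨hc0, hcpos⟩ := hc₀
  obtain ⟨hu0, hupos⟩ := hu₀
  constructor
  · have h := key b
      (fun s t => max ((u₀ t - (-c₀ t + c₀ t) / 2) - (u₀ s - (-c₀ s + c₀ s) / 2)
          - ((c₀ t - -c₀ t) + (c₀ s - -c₀ s)) / 2) 0)
      (fun s t => max (u t - u s - c) 0)
      (fun s => max (u s - ξ₀ - c / 2) 0)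
      (fun t => le_max_right _ _)
      (fun t ht => by
        simp only [hupos t ht, hcpos t ht, hu0, hc0]
        congr 1; ring)
      (fun s t hs ht => by
        simp only [hupos t ht, hupos s hs, hcpos t ht, hcpos s hs]
        congr 1; ring)
    exact h
  · have h := key b
      (fun s t => max ((u₀ s - (-c₀ s + c₀ s) / 2) - (u₀ t - (-c₀ t + c₀ t) / 2)
          - ((c₀ t - -c₀ t) + (c₀ s - -c₀ s)) / 2) 0)
      (fun s t => max (u s - u t - c) 0)
      (fun s => max (ξ₀ - u s - c / 2) 0)
      (fun t => le_max_right _ _)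
      (fun t ht => by
        simp only [hupos t ht, hcpos t ht, hu0, hc0]
        congr 1; ring)
      (fun s t hs ht => by
        simp only [hupos t ht, hupos s hs, hcpos t ht, hcpos s hs]
        congr 1; ring)
    exact h
end

section
/- Let (η₁ʲ)_{j≥1}, (θ₁ʲ)_{j≥1}, (η₂ʲ)_{j≥1}, (θ₂ʲ)_{j≥1} be real sequences and ξ₁⁰, ξ₂⁰ ∈ ℝ. Define recursively ξᵢʲ := min(max(ηᵢʲ, ξᵢ^{j−1}), θᵢʲ) for i = 1, 2 and j ≥ 1. Then for every n ≥ 1, |ξ₁ⁿ − ξ₂ⁿ| ≤ max( |ξ₁⁰ − ξ₂⁰|, max_{1 ≤ j ≤ n} |η₁ʲ − η₂ʲ|, max_{1 ≤ j ≤ n} |θ₁ʲ − θ₂ʲ| ). -/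
open Filter Set Topology
open scoped ENNReal

lemma step_aux (a b p q r s : ℝ) (M : ℝ) (hab : |a - b| ≤ M)
    (hpq : |p - q| ≤ M) (hrs : |r - s| ≤ M) :
    |min (max p a) r - min (max q b) s| ≤ M := by
  rw [abs_le] at *
  constructor <;>
  · simp only [min_def, max_def]
    split_ifs <;> linarith

/-- iterating the one-step play operators, the distance of
the outputs is bounded by the max of the distance of the starting points
and the distances of the corresponding bounds. -/
theorem stmt14 (η₁ η₂ θ₁ θ₂ : ℕ → ℝ) (ξ₁ ξ₂ : ℕ → ℝ)
    (h₁ : ∀ j : ℕ, ξ₁ (j + 1) = min (max (η₁ (j + 1)) (ξ₁ j)) (θ₁ (j + 1)))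
    (h₂ : ∀ j : ℕ, ξ₂ (j + 1) = min (max (η₂ (j + 1)) (ξ₂ j)) (θ₂ (j + 1)))
    (n : ℕ) (hn : 1 ≤ n) (hne : (Finset.Icc 1 n).Nonempty) :
    |ξ₁ n - ξ₂ n| ≤
      max (|ξ₁ 0 - ξ₂ 0|)
        (max ((Finset.Icc 1 n).sup' hne fun j => |η₁ j - η₂ j|)
          ((Finset.Icc 1 n).sup' hne fun j => |θ₁ j - θ₂ j|)) := by
  set M := max (|ξ₁ 0 - ξ₂ 0|)
        (max ((Finset.Icc 1 n).sup' hne fun j => |η₁ j - η₂ j|)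
          ((Finset.Icc 1 n).sup' hne fun j => |θ₁ j - θ₂ j|)) with hM
  have key : ∀ m, m ≤ n → |ξ₁ m - ξ₂ m| ≤ M := by
    intro m
    induction m with
    | zero => intro _; exact le_max_left _ _
    | succ k ih =>
      intro hk
      have hk' : k ≤ n := Nat.le_of_succ_le hk
      have hmem : k + 1 ∈ Finset.Icc 1 n := Finset.mem_Icc.mpr ⟨Nat.succ_le_succ (Nat.zero_le k), hk⟩
      have hη : |η₁ (k+1) - η₂ (k+1)| ≤ M := by
        refine le_trans ?_ (le_trans (le_max_left _ _) (le_max_right _ _))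
        exact Finset.le_sup' (fun j => |η₁ j - η₂ j|) hmem
      have hθ : |θ₁ (k+1) - θ₂ (k+1)| ≤ M := by
        refine le_trans ?_ (le_trans (le_max_right _ _) (le_max_right _ _))
        exact Finset.le_sup' (fun j => |θ₁ j - θ₂ j|) hmem
      rw [h₁ k, h₂ k]
      exact step_aux _ _ _ _ _ _ M (ih hk') hη hθ
  exact key n le_rfl
end

section
/- Let ψ₁, ψ₂ : [0,∞) → ℝ, t > 0, c > 0 and δ ∈ (0,1). Then TV^c(ψ₁ + ψ₂, [0,t]) ≤ TV^{δc}(ψ₁, [0,t]) + TV^{(1−δ)c}(ψ₂, [0,t]). -/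
open Filter Set Topology
open scoped ENNReal

/-- subadditivity of truncated variation over sums of
functions, with split truncation levels. -/
theorem stmt16 (ψ₁ ψ₂ : ℝ → ℝ) (t c δ : ℝ)
    (ht : 0 < t) (hc : 0 < c) (hδ₀ : 0 < δ) (hδ₁ : δ < 1) :
    TVc (fun s => ψ₁ s + ψ₂ s) c 0 t ≤
      TVc ψ₁ (δ * c) 0 t + TVc ψ₂ ((1 - δ) * c) 0 t := by
  have key : ∀ s u : ℝ,
      max (|(ψ₁ u + ψ₂ u) - (ψ₁ s + ψ₂ s)| - c) 0 ≤
        max (|ψ₁ u - ψ₁ s| - δ * c) 0 + max (|ψ₂ u - ψ₂ s| - (1 - δ) * c) 0 := by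
    intro s u
    have h1 : |(ψ₁ u + ψ₂ u) - (ψ₁ s + ψ₂ s)| ≤ |ψ₁ u - ψ₁ s| + |ψ₂ u - ψ₂ s| := by
      have : (ψ₁ u + ψ₂ u) - (ψ₁ s + ψ₂ s) = (ψ₁ u - ψ₁ s) + (ψ₂ u - ψ₂ s) := by ring
      rw [this]; exact abs_add_le _ _
    have hc' : δ * c + (1 - δ) * c = c := by ring
    have : |(ψ₁ u + ψ₂ u) - (ψ₁ s + ψ₂ s)| - c ≤
        (|ψ₁ u - ψ₁ s| - δ * c) + (|ψ₂ u - ψ₂ s| - (1 - δ) * c) := by linarith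
    rcases le_total (|(ψ₁ u + ψ₂ u) - (ψ₁ s + ψ₂ s)| - c) 0 with h | h
    · simp [max_eq_right h]
      positivity
    · rw [max_eq_left h]
      calc |(ψ₁ u + ψ₂ u) - (ψ₁ s + ψ₂ s)| - c
          ≤ (|ψ₁ u - ψ₁ s| - δ * c) + (|ψ₂ u - ψ₂ s| - (1 - δ) * c) := this
        _ ≤ _ := add_le_add (le_max_left _ _) (le_max_left _ _)
  unfold TVc genVar
  refine iSup_le fun n => iSup_le fun τ => iSup_le fun h => ?_
  calc ENNReal.ofReal (∑ i ∈ Finset.range n,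
        max (|(ψ₁ (τ (i+1)) + ψ₂ (τ (i+1))) - (ψ₁ (τ i) + ψ₂ (τ i))| - c) 0)
      ≤ ENNReal.ofReal (∑ i ∈ Finset.range n,
          (max (|ψ₁ (τ (i+1)) - ψ₁ (τ i)| - δ * c) 0
            + max (|ψ₂ (τ (i+1)) - ψ₂ (τ i)| - (1 - δ) * c) 0)) := by
        exact ENNReal.ofReal_le_ofReal (Finset.sum_le_sum fun i _ => key _ _)
    _ = ENNReal.ofReal (∑ i ∈ Finset.range n, max (|ψ₁ (τ (i+1)) - ψ₁ (τ i)| - δ * c) 0)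
        + ENNReal.ofReal (∑ i ∈ Finset.range n,
            max (|ψ₂ (τ (i+1)) - ψ₂ (τ i)| - (1 - δ) * c) 0) := by
        rw [Finset.sum_add_distrib, ENNReal.ofReal_add] <;>
          exact Finset.sum_nonneg fun i _ => le_max_right _ _
    _ ≤ _ := by
        refine add_le_add ?_ ?_
        · exact le_iSup_of_le n (le_iSup_of_le τ (le_iSup_of_le h le_rfl))
        · exact le_iSup_of_le n (le_iSup_of_le τ (le_iSup_of_le h le_rfl))
end

section
/- Let ψ₁, ψ₂ : [0,∞) → ℝ, t > 0, c > 0 and δ ∈ (0,1). Then TV^{δc}(ψ₁ + ψ₂, [0,t]) ≥ TV^c(ψ₁, [0,t]) − TV^{(1−δ)c}(ψ₂, [0,t]). -/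
open Filter Set Topology
open scoped ENNReal

/-- lower bound for the truncated variation of a sum:
`TV^{δc}(ψ₁+ψ₂) ≥ TV^c(ψ₁) - TV^{(1-δ)c}(ψ₂)`. -/
theorem stmt17 (ψ₁ ψ₂ : ℝ → ℝ) (t c δ : ℝ)
    (ht : 0 < t) (hc : 0 < c) (hδ₀ : 0 < δ) (hδ₁ : δ < 1) :
    TVc ψ₁ c 0 t - TVc ψ₂ ((1 - δ) * c) 0 t ≤
      TVc (fun s => ψ₁ s + ψ₂ s) (δ * c) 0 t := by
  rw [tsub_le_iff_right]
  unfold TVc genVar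
  refine iSup_le fun n => iSup_le fun τ => iSup_le fun hτ => ?_
  have key : ∀ i ∈ Finset.range n,
      max (|ψ₁ (τ (i+1)) - ψ₁ (τ i)| - c) 0 ≤
        max (|(ψ₁ (τ (i+1)) + ψ₂ (τ (i+1))) - (ψ₁ (τ i) + ψ₂ (τ i))| - δ*c) 0 +
        max (|ψ₂ (τ (i+1)) - ψ₂ (τ i)| - (1-δ)*c) 0 := by
    intro i _
    have h1 : |ψ₁ (τ (i+1)) - ψ₁ (τ i)| ≤
        |(ψ₁ (τ (i+1)) + ψ₂ (τ (i+1))) - (ψ₁ (τ i) + ψ₂ (τ i))| +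
        |ψ₂ (τ (i+1)) - ψ₂ (τ i)| := by
      have := abs_add_le ((ψ₁ (τ (i+1)) + ψ₂ (τ (i+1))) - (ψ₁ (τ i) + ψ₂ (τ i)))
        (-(ψ₂ (τ (i+1)) - ψ₂ (τ i)))
      rw [abs_neg] at this
      have he : (ψ₁ (τ (i+1)) + ψ₂ (τ (i+1))) - (ψ₁ (τ i) + ψ₂ (τ i)) +
          -(ψ₂ (τ (i+1)) - ψ₂ (τ i)) = ψ₁ (τ (i+1)) - ψ₁ (τ i) := by ring
      rwa [he] at this
    apply max_le
    · have h2 := le_max_left (|(ψ₁ (τ (i+1)) + ψ₂ (τ (i+1))) - (ψ₁ (τ i) + ψ₂ (τ i))| - δ*c) 0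
      have h3 := le_max_left (|ψ₂ (τ (i+1)) - ψ₂ (τ i)| - (1-δ)*c) 0
      linarith
    · have h2 := le_max_right (|(ψ₁ (τ (i+1)) + ψ₂ (τ (i+1))) - (ψ₁ (τ i) + ψ₂ (τ i))| - δ*c) 0
      have h3 := le_max_right (|ψ₂ (τ (i+1)) - ψ₂ (τ i)| - (1-δ)*c) 0
      linarith
  have hsum : ∑ i ∈ Finset.range n, max (|ψ₁ (τ (i+1)) - ψ₁ (τ i)| - c) 0 ≤
      (∑ i ∈ Finset.range n,
        max (|(ψ₁ (τ (i+1)) + ψ₂ (τ (i+1))) - (ψ₁ (τ i) + ψ₂ (τ i))| - δ*c) 0) +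
      (∑ i ∈ Finset.range n, max (|ψ₂ (τ (i+1)) - ψ₂ (τ i)| - (1-δ)*c) 0) := by
    rw [← Finset.sum_add_distrib]
    exact Finset.sum_le_sum key
  calc ENNReal.ofReal (∑ i ∈ Finset.range n, max (|ψ₁ (τ (i+1)) - ψ₁ (τ i)| - c) 0)
      ≤ ENNReal.ofReal ((∑ i ∈ Finset.range n,
          max (|(ψ₁ (τ (i+1)) + ψ₂ (τ (i+1))) - (ψ₁ (τ i) + ψ₂ (τ i))| - δ*c) 0) +
        (∑ i ∈ Finset.range n, max (|ψ₂ (τ (i+1)) - ψ₂ (τ i)| - (1-δ)*c) 0)) :=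
        ENNReal.ofReal_le_ofReal hsum
    _ ≤ ENNReal.ofReal (∑ i ∈ Finset.range n,
          max (|(ψ₁ (τ (i+1)) + ψ₂ (τ (i+1))) - (ψ₁ (τ i) + ψ₂ (τ i))| - δ*c) 0) +
        ENNReal.ofReal (∑ i ∈ Finset.range n,
          max (|ψ₂ (τ (i+1)) - ψ₂ (τ i)| - (1-δ)*c) 0) := ENNReal.ofReal_add_le
    _ ≤ _ := by
        gcongr
        · exact le_iSup_of_le n (le_iSup_of_le τ (le_iSup_of_le hτ le_rfl))
        · exact le_iSup_of_le n (le_iSup_of_le τ (le_iSup_of_le hτ le_rfl))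
end

section
/- Let ψ₁, ψ₂ : [0,∞) → ℝ, t > 0, and let φ : (0,∞) → (0,∞) be a non-decreasing function that is regularly varying at 0, i.e., there exists θ ≥ 0 such that for every δ ∈ (0,1), lim_{c→0⁺} φ(c)/φ(δc) = δ^{−θ}. Assume the limit L := lim_{c→0⁺} φ(c)·TV^c(ψ₁,[0,t]) exists with 0 < L < ∞, and that limsup_{c→0⁺} φ(c)·TV^c(ψ₂,[0,t]) = 0. Then lim_{c→0⁺} φ(c)·TV^c(ψ₁ + ψ₂,[0,t]) exists and equals L. -/
open Filter Set Topology
open scoped ENNReal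

lemma genVar_congr {f g : ℝ → ℝ → ℝ} (a b : ℝ) (h : ∀ s t, f s t = g s t) :
    genVar f a b = genVar g a b := by
  have : f = g := funext fun s => funext fun t => h s t
  rw [this]

lemma genVar_le_add (f g h : ℝ → ℝ → ℝ) (a b : ℝ)
    (hle : ∀ s t, f s t ≤ g s t + h s t)
    (hg : ∀ s t, 0 ≤ g s t) (hh : ∀ s t, 0 ≤ h s t) :
    genVar f a b ≤ genVar g a b + genVar h a b := by
  rw [genVar]
  refine iSup_le fun n => iSup_le fun tt => iSup_le fun hp => ?_
  calc ENNReal.ofReal (∑ i ∈ Finset.range n, f (tt i) (tt (i+1)))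
      ≤ ENNReal.ofReal (∑ i ∈ Finset.range n,
          (g (tt i) (tt (i+1)) + h (tt i) (tt (i+1)))) := by
        exact ENNReal.ofReal_le_ofReal
          (Finset.sum_le_sum fun i _ => hle _ _)
    _ = ENNReal.ofReal (∑ i ∈ Finset.range n, g (tt i) (tt (i+1)))
        + ENNReal.ofReal (∑ i ∈ Finset.range n, h (tt i) (tt (i+1))) := by
        rw [Finset.sum_add_distrib,
          ENNReal.ofReal_add (Finset.sum_nonneg fun i _ => hg _ _)
            (Finset.sum_nonneg fun i _ => hh _ _)]
    _ ≤ genVar g a b + genVar h a b := by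
        refine add_le_add ?_ ?_ <;>
        · rw [genVar]
          exact le_iSup_of_le n (le_iSup_of_le tt (le_iSup_of_le hp le_rfl))

lemma max_key (A B c₁ c₂ : ℝ) :
    max (|A + B| - (c₁ + c₂)) 0 ≤ max (|A| - c₁) 0 + max (|B| - c₂) 0 := by
  apply max_le
  · have hab := abs_add_le A B
    calc |A + B| - (c₁ + c₂) ≤ (|A| - c₁) + (|B| - c₂) := by linarith
      _ ≤ max (|A| - c₁) 0 + max (|B| - c₂) 0 :=
        add_le_add (le_max_left _ _) (le_max_left _ _)
  · positivity

lemma TVc_add_le (f g : ℝ → ℝ) (c₁ c₂ a b : ℝ) :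
    TVc (fun s => f s + g s) (c₁ + c₂) a b ≤ TVc f c₁ a b + TVc g c₂ a b := by
  refine genVar_le_add _ _ _ a b (fun s t => ?_) (fun s t => le_max_right _ _)
    (fun s t => le_max_right _ _)
  have h : (f t + g t) - (f s + g s) = (f t - f s) + (g t - g s) := by ring
  rw [h]
  exact max_key _ _ _ _

lemma TVc_neg (g : ℝ → ℝ) (c a b : ℝ) :
    TVc (fun s => -g s) c a b = TVc g c a b := by
  refine genVar_congr a b fun s t => ?_
  rw [show -g t - -g s = -(g t - g s) by ring, abs_neg]

lemma TVc_lower (f g : ℝ → ℝ) (c₁ c₂ a b : ℝ) :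
    TVc f (c₁ + c₂) a b ≤ TVc (fun s => f s + g s) c₁ a b + TVc g c₂ a b := by
  have h := TVc_add_le (fun s => f s + g s) (fun s => -g s) c₁ c₂ a b
  rw [TVc_neg] at h
  have he : TVc (fun s => (f s + g s) + -g s) (c₁ + c₂) a b
      = TVc f (c₁ + c₂) a b :=
    genVar_congr a b fun s t => by ring_nf
  rwa [he] at h

lemma tendsto_mul_self (δ : ℝ) (hδ : 0 < δ) :
    Tendsto (fun c => δ * c) (𝓝[>] (0:ℝ)) (𝓝[>] (0:ℝ)) := by
  apply tendsto_nhdsWithin_of_tendsto_nhds_of_eventually_within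
  · have h : Tendsto (fun c : ℝ => δ * c) (𝓝 0) (𝓝 (δ * 0)) :=
      (continuous_const.mul continuous_id).tendsto 0
    rw [mul_zero] at h
    exact h.mono_left nhdsWithin_le_nhds
  · filter_upwards [self_mem_nhdsWithin] with c hc
    exact mem_Ioi.2 (mul_pos hδ hc)

lemma Y_zero (φ : ℝ → ℝ) (ψ₂ : ℝ → ℝ) (t θ : ℝ)
    (hφpos : ∀ c, 0 < c → 0 < φ c)
    (hreg : ∀ δ : ℝ, 0 < δ → δ < 1 →
      Tendsto (fun c => φ c / φ (δ * c)) (𝓝[>] (0:ℝ)) (𝓝 (δ ^ (-θ))))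
    (h₂ : Filter.limsup (fun c => ENNReal.ofReal (φ c) * TVc ψ₂ c 0 t)
      (𝓝[>] (0:ℝ)) = 0)
    (η : ℝ) (hη0 : 0 < η) (hη1 : η < 1) :
    Tendsto (fun c => ENNReal.ofReal (φ c) * TVc ψ₂ (η * c) 0 t)
      (𝓝[>] (0:ℝ)) (𝓝 0) := by
  have hB : Tendsto (fun c => ENNReal.ofReal (φ (η * c)) * TVc ψ₂ (η * c) 0 t)
      (𝓝[>] (0:ℝ)) (𝓝 0) := by
    rw [ENNReal.tendsto_nhds_zero]
    intro a ha
    have h1 : ∀ᶠ c' in 𝓝[>] (0:ℝ),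
        (fun c => ENNReal.ofReal (φ c) * TVc ψ₂ c 0 t) c' < a :=
      eventually_lt_of_limsup_lt (by rw [h₂]; exact ha)
    exact ((tendsto_mul_self η hη0).eventually h1).mono fun c hc => hc.le
  have hmul := ENNReal.Tendsto.mul
    (ENNReal.tendsto_ofReal (hreg η hη0 hη1))
    (Or.inr ENNReal.zero_ne_top) hB (Or.inr ENNReal.ofReal_ne_top)
  rw [mul_zero] at hmul
  refine Tendsto.congr' ?_ hmul
  filter_upwards [self_mem_nhdsWithin] with c hc
  have hc' : (0:ℝ) < c := hc
  rw [← mul_assoc,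
    ← ENNReal.ofReal_mul (div_nonneg (hφpos c hc').le (hφpos _ (mul_pos hη0 hc')).le),
    div_mul_cancel₀ _ (hφpos _ (mul_pos hη0 hc')).ne']

/-- Lemma 1 of the paper: if `φ` is non-decreasing and
regularly varying at `0` with index `θ ≥ 0`, `φ(c)·TV^c(ψ₁,[0,t]) → L`
with `0 < L < ∞` and `limsup φ(c)·TV^c(ψ₂,[0,t]) = 0` as `c → 0⁺`, then
`φ(c)·TV^c(ψ₁+ψ₂,[0,t]) → L`. -/
theorem stmt18 (ψ₁ ψ₂ : ℝ → ℝ) (t : ℝ) (ht : 0 < t)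
    (φ : ℝ → ℝ) (hφpos : ∀ c, 0 < c → 0 < φ c)
    (hφmono : ∀ c₁ c₂, 0 < c₁ → c₁ ≤ c₂ → φ c₁ ≤ φ c₂)
    (θ : ℝ) (hθ : 0 ≤ θ)
    (hreg : ∀ δ : ℝ, 0 < δ → δ < 1 →
      Tendsto (fun c => φ c / φ (δ * c)) (𝓝[>] (0:ℝ)) (𝓝 (δ ^ (-θ))))
    (L : ℝ≥0∞) (hL₀ : 0 < L) (hL : L < ⊤)
    (h₁ : Tendsto (fun c => ENNReal.ofReal (φ c) * TVc ψ₁ c 0 t)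
      (𝓝[>] (0:ℝ)) (𝓝 L))
    (h₂ : Filter.limsup (fun c => ENNReal.ofReal (φ c) * TVc ψ₂ c 0 t)
      (𝓝[>] (0:ℝ)) = 0) :
    Tendsto (fun c => ENNReal.ofReal (φ c) *
        TVc (fun s => ψ₁ s + ψ₂ s) c 0 t)
      (𝓝[>] (0:ℝ)) (𝓝 L) := by
  set A : ℝ → ℝ≥0∞ :=
    fun c => ENNReal.ofReal (φ c) * TVc (fun s => ψ₁ s + ψ₂ s) c 0 t with hA
  have hsplit : ∀ c x : ℝ, 0 < c → 0 < x →
      ENNReal.ofReal (φ c) =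
        ENNReal.ofReal (φ c / φ x) * ENNReal.ofReal (φ x) := by
    intro c x hc hx
    rw [← ENNReal.ofReal_mul (div_nonneg (hφpos c hc).le (hφpos x hx).le),
      div_mul_cancel₀ _ (hφpos x hx).ne']
  -- upper bound
  have upper : ∀ ε : ℝ, 0 < ε → ε < 1/2 →
      limsup A (𝓝[>] (0:ℝ)) ≤ ENNReal.ofReal ((1 - ε) ^ (-θ)) * L := by
    intro ε hε0 hε1
    have hδ0 : (0:ℝ) < 1 - ε := by linarith
    have hδ1 : (1:ℝ) - ε < 1 := by linarith
    have hX : Tendsto (fun c => ENNReal.ofReal (φ c / φ ((1 - ε) * c)) *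
        (ENNReal.ofReal (φ ((1 - ε) * c)) * TVc ψ₁ ((1 - ε) * c) 0 t))
        (𝓝[>] (0:ℝ)) (𝓝 (ENNReal.ofReal ((1 - ε) ^ (-θ)) * L)) :=
      ENNReal.Tendsto.mul (ENNReal.tendsto_ofReal (hreg _ hδ0 hδ1))
        (Or.inr hL.ne) (h₁.comp (tendsto_mul_self _ hδ0))
        (Or.inr ENNReal.ofReal_ne_top)
    have hY : Tendsto (fun c => ENNReal.ofReal (φ c) * TVc ψ₂ (ε * c) 0 t)
        (𝓝[>] (0:ℝ)) (𝓝 0) :=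
      Y_zero φ ψ₂ t θ hφpos hreg h₂ ε hε0 (by linarith)
    have hXY := hX.add hY
    rw [add_zero] at hXY
    have hev : ∀ᶠ c in 𝓝[>] (0:ℝ), A c ≤
        ENNReal.ofReal (φ c / φ ((1 - ε) * c)) *
          (ENNReal.ofReal (φ ((1 - ε) * c)) * TVc ψ₁ ((1 - ε) * c) 0 t)
        + ENNReal.ofReal (φ c) * TVc ψ₂ (ε * c) 0 t := by
      filter_upwards [self_mem_nhdsWithin] with c hc
      have hc' : (0:ℝ) < c := hc
      have key : TVc (fun s => ψ₁ s + ψ₂ s) c 0 t ≤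
          TVc ψ₁ ((1 - ε) * c) 0 t + TVc ψ₂ (ε * c) 0 t := by
        have h := TVc_add_le ψ₁ ψ₂ ((1 - ε) * c) (ε * c) 0 t
        rwa [show (1 - ε) * c + ε * c = c by ring] at h
      calc A c ≤ ENNReal.ofReal (φ c) *
            (TVc ψ₁ ((1 - ε) * c) 0 t + TVc ψ₂ (ε * c) 0 t) :=
          mul_le_mul_right key _
        _ = _ := by
          rw [mul_add, ← mul_assoc,
            ← hsplit c ((1 - ε) * c) hc' (mul_pos hδ0 hc')]
    exact (limsup_le_limsup hev).trans_eq hXY.limsup_eq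
  -- lower bound
  have lower : ∀ ε : ℝ, 0 < ε → ε < 1/2 →
      ENNReal.ofReal ((1 - ε) ^ θ) * L ≤ liminf A (𝓝[>] (0:ℝ)) := by
    intro ε hε0 hε1
    have hδ0 : (0:ℝ) < 1 - ε := by linarith
    have hδ1 : (1:ℝ) - ε < 1 := by linarith
    have hδne : (1:ℝ) - ε ≠ 0 := hδ0.ne'
    have hη0 : (0:ℝ) < ε / (1 - ε) := div_pos hε0 hδ0
    have hη1 : ε / (1 - ε) < 1 := by
      rw [div_lt_one hδ0]; linarith
    have hratio : Tendsto (fun c => φ c / φ ((1 - ε)⁻¹ * c))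
        (𝓝[>] (0:ℝ)) (𝓝 ((1 - ε) ^ θ)) := by
      have h1 : Tendsto (fun c' => (φ c' / φ ((1 - ε) * c'))⁻¹)
          (𝓝[>] (0:ℝ)) (𝓝 (((1 - ε) ^ (-θ))⁻¹)) :=
        (hreg _ hδ0 hδ1).inv₀ (Real.rpow_pos_of_pos hδ0 _).ne'
      have h2 := h1.comp (tendsto_mul_self (1 - ε)⁻¹ (by positivity))
      have hval : (((1 - ε):ℝ) ^ (-θ))⁻¹ = (1 - ε) ^ θ := by
        rw [Real.rpow_neg hδ0.le, inv_inv]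
      rw [← hval]
      refine h2.congr fun c => ?_
      simp only [Function.comp]
      rw [show (1 - ε) * ((1 - ε)⁻¹ * c) = c by field_simp, inv_div]
    have hW : Tendsto (fun c => ENNReal.ofReal (φ c / φ ((1 - ε)⁻¹ * c)) *
        (ENNReal.ofReal (φ ((1 - ε)⁻¹ * c)) * TVc ψ₁ ((1 - ε)⁻¹ * c) 0 t))
        (𝓝[>] (0:ℝ)) (𝓝 (ENNReal.ofReal ((1 - ε) ^ θ) * L)) :=
      ENNReal.Tendsto.mul (ENNReal.tendsto_ofReal hratio) (Or.inr hL.ne)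
        (h₁.comp (tendsto_mul_self _ (by positivity)))
        (Or.inr ENNReal.ofReal_ne_top)
    have hY' : Tendsto (fun c => ENNReal.ofReal (φ c) *
        TVc ψ₂ ((ε / (1 - ε)) * c) 0 t) (𝓝[>] (0:ℝ)) (𝓝 0) :=
      Y_zero φ ψ₂ t θ hφpos hreg h₂ _ hη0 hη1
    have hsub := ENNReal.Tendsto.sub hW hY' (Or.inr ENNReal.zero_ne_top)
    rw [tsub_zero] at hsub
    have hev : ∀ᶠ c in 𝓝[>] (0:ℝ),
        ENNReal.ofReal (φ c / φ ((1 - ε)⁻¹ * c)) *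
          (ENNReal.ofReal (φ ((1 - ε)⁻¹ * c)) * TVc ψ₁ ((1 - ε)⁻¹ * c) 0 t)
        - ENNReal.ofReal (φ c) * TVc ψ₂ ((ε / (1 - ε)) * c) 0 t ≤ A c := by
      filter_upwards [self_mem_nhdsWithin] with c hc
      have hc' : (0:ℝ) < c := hc
      rw [tsub_le_iff_right]
      have key : TVc ψ₁ ((1 - ε)⁻¹ * c) 0 t ≤
          TVc (fun s => ψ₁ s + ψ₂ s) c 0 t + TVc ψ₂ ((ε / (1 - ε)) * c) 0 t := by
        have h := TVc_lower ψ₁ ψ₂ c ((ε / (1 - ε)) * c) 0 t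
        rwa [show c + (ε / (1 - ε)) * c = (1 - ε)⁻¹ * c by
          field_simp; ring] at h
      calc ENNReal.ofReal (φ c / φ ((1 - ε)⁻¹ * c)) *
            (ENNReal.ofReal (φ ((1 - ε)⁻¹ * c)) * TVc ψ₁ ((1 - ε)⁻¹ * c) 0 t)
          = ENNReal.ofReal (φ c) * TVc ψ₁ ((1 - ε)⁻¹ * c) 0 t := by
            rw [← mul_assoc, ← hsplit c ((1 - ε)⁻¹ * c) hc'
              (by positivity)]
        _ ≤ ENNReal.ofReal (φ c) * (TVc (fun s => ψ₁ s + ψ₂ s) c 0 t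
            + TVc ψ₂ ((ε / (1 - ε)) * c) 0 t) := mul_le_mul_right key _
        _ = _ := by rw [mul_add]
    exact hsub.liminf_eq ▸ liminf_le_liminf hev
  -- conclude
  have hg : Tendsto (fun ε : ℝ => ENNReal.ofReal ((1 - ε) ^ (-θ)) * L)
      (𝓝[>] (0:ℝ)) (𝓝 L) := by
    have h1 : Tendsto (fun ε : ℝ => (1 - ε) ^ (-θ)) (𝓝 (0:ℝ)) (𝓝 1) := by
      have hcont : Continuous (fun ε : ℝ => 1 - ε) := by continuity
      have h0 : Tendsto (fun ε : ℝ => 1 - ε) (𝓝 0) (𝓝 1) := by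
        simpa using hcont.tendsto 0
      have := h0.rpow_const (p := -θ) (Or.inl one_ne_zero)
      simpa using this
    have h2 : Tendsto (fun ε : ℝ => ENNReal.ofReal ((1 - ε) ^ (-θ)) * L)
        (𝓝 (0:ℝ)) (𝓝 (ENNReal.ofReal 1 * L)) :=
      ENNReal.Tendsto.mul_const (ENNReal.tendsto_ofReal h1)
        (Or.inr hL.ne)
    rw [ENNReal.ofReal_one, one_mul] at h2
    exact h2.mono_left nhdsWithin_le_nhds
  have hg' : Tendsto (fun ε : ℝ => ENNReal.ofReal ((1 - ε) ^ θ) * L)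
      (𝓝[>] (0:ℝ)) (𝓝 L) := by
    have h1 : Tendsto (fun ε : ℝ => (1 - ε) ^ θ) (𝓝 (0:ℝ)) (𝓝 1) := by
      have hcont : Continuous (fun ε : ℝ => 1 - ε) := by continuity
      have h0 : Tendsto (fun ε : ℝ => 1 - ε) (𝓝 0) (𝓝 1) := by
        simpa using hcont.tendsto 0
      have := h0.rpow_const (p := θ) (Or.inl one_ne_zero)
      simpa using this
    have h2 : Tendsto (fun ε : ℝ => ENNReal.ofReal ((1 - ε) ^ θ) * L)
        (𝓝 (0:ℝ)) (𝓝 (ENNReal.ofReal 1 * L)) :=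
      ENNReal.Tendsto.mul_const (ENNReal.tendsto_ofReal h1)
        (Or.inr hL.ne)
    rw [ENNReal.ofReal_one, one_mul] at h2
    exact h2.mono_left nhdsWithin_le_nhds
  have hevε : ∀ᶠ ε in 𝓝[>] (0:ℝ), ε ∈ Ioo (0:ℝ) (1/2) :=
    Ioo_mem_nhdsGT_of_mem (by norm_num)
  have hls : limsup A (𝓝[>] (0:ℝ)) ≤ L := by
    refine ge_of_tendsto hg ?_
    filter_upwards [hevε] with ε hε
    exact upper ε hε.1 hε.2
  have hli : L ≤ liminf A (𝓝[>] (0:ℝ)) := by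
    refine le_of_tendsto hg' ?_
    filter_upwards [hevε] with ε hε
    exact lower ε hε.1 hε.2
  have hle : liminf A (𝓝[>] (0:ℝ)) ≤ limsup A (𝓝[>] (0:ℝ)) := liminf_le_limsup
  exact tendsto_of_liminf_eq_limsup
    (le_antisymm (hle.trans hls) hli)
    (le_antisymm hls (hli.trans hle))
end
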